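/- arXiv:1703.02636 — 5 statements merged into one kernel-verified Lean document; each statement's English description precedes it below -/
import Mathlib

section
/- Let γ ∈ (0,1) and let f be locally Lipschitz continuous on an open interval (α, β) ⊂ ℝ. Then for every u₀ ∈ (α, β) there exist T > 0 and a unique continuous solution u : [0,T) → (α, β) of the fractional ODE D_c^γ u = f(u) with u(0) = u₀; moreover, letting T_b be the maximal existence time, either T_b = ∞, or T_b < ∞ and liminf_{t→T_b⁻} u(t) = α or limsup_{t→T_b⁻} u(t) = β. -/
/-!
The kernel `(t - s) ^ (γ - 1)` has mass `(t - b) ^ γ / γ` on `[b, t]`, and for `γ ≤ 1` the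
Volterra integral of a bounded function is `γ`-Hölder in `t`. Hence, after a solution on `[0, b]`,
the equation on `[b, b + ε]` (with `f` frozen outside a `δ`-ball around `u b`, where it is
`K`-Lipschitz and bounded by `M`) is a contraction on continuous functions whose fixed point stays
in the ball; `ε` depends only on `K`, `M` and `δ`. The same smallness of the kernel gives
uniqueness, stepping through `[0, τ]` in intervals of length `ε`, and the maximal solution is the
union of all solutions. If `T_b < ∞` while `u` approaches neither `α` nor `β`, then `u` stays in a
compact subset of `(α, β)`, and one continuation step of uniform length started shortly before
`T_b` yields a solution beyond `T_b`.
-/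

open MeasureTheory Real Filter Set Asymptotics
open scoped ENNReal Topology

/-- `u` is a solution of the Volterra integral form of the fractional ODE
`D_c^γ u = f(u)`, `u(0) = u₀`, on the interval `[0, T)` (with `T ∈ (0,∞]`),
taking values in the set `D`. -/
noncomputable def IsSolUpTo (γ : ℝ) (f : ℝ → ℝ) (D : Set ℝ) (u₀ : ℝ) (u : ℝ → ℝ)
    (T : ℝ≥0∞) : Prop :=
  u 0 = u₀ ∧
  ContinuousOn u {t : ℝ | 0 ≤ t ∧ ENNReal.ofReal t < T} ∧
  (∀ t : ℝ, 0 ≤ t → ENNReal.ofReal t < T → u t ∈ D) ∧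
  (∀ t : ℝ, 0 ≤ t → ENNReal.ofReal t < T →
    u t = u₀ + (1 / Real.Gamma γ) * ∫ s in (0:ℝ)..t, (t - s) ^ (γ - 1) * f (u s))

/-- The maximal existence time `T_b`: the supremum of all `T` such that a solution
exists on `[0, T)`. -/
noncomputable def maxTime (γ : ℝ) (f : ℝ → ℝ) (D : Set ℝ) (u₀ : ℝ) : ℝ≥0∞ :=
  sSup {T : ℝ≥0∞ | ∃ u : ℝ → ℝ, IsSolUpTo γ f D u₀ u T}

open intervalIntegral
open scoped NNReal

theorem eventually_mul_rpow_lt {γ : ℝ} (hγ : 0 < γ) (C : ℝ) {d : ℝ} (hd : 0 < d) :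
    ∀ᶠ ε in 𝓝[>] (0 : ℝ), C * ε ^ γ < d := by
  have hlim : Tendsto (fun ε : ℝ => C * ε ^ γ) (𝓝[>] 0) (𝓝 0) := by
    simpa [zero_rpow hγ.ne'] using
      ((continuousAt_rpow_const 0 γ (.inr hγ.le)).tendsto.const_mul C).mono_left
        nhdsWithin_le_nhds
  exact hlim.eventually (Iio_mem_nhds hd)

theorem continuousOn_of_abs_sub_le_mul_rpow {φ : ℝ → ℝ} {s : Set ℝ} {C γ : ℝ} (hγ : 0 < γ)
    (h : ∀ x ∈ s, ∀ y ∈ s, x ≤ y → |φ y - φ x| ≤ C * (y - x) ^ γ) : ContinuousOn φ s := by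
  intro x hx
  have hdist : ∀ y ∈ s, dist (φ y) (φ x) ≤ C * |y - x| ^ γ := by
    intro y hy
    rcases le_total x y with hxy | hyx
    · rw [dist_eq, abs_of_nonneg (sub_nonneg.2 hxy)]
      exact h x hx y hy hxy
    · rw [dist_eq, abs_sub_comm, abs_sub_comm y, abs_of_nonneg (sub_nonneg.2 hyx)]
      exact h y hy x hx hyx
  have hlim : Tendsto (fun y => C * |y - x| ^ γ) (𝓝[s] x) (𝓝 0) := by
    have hcont : Continuous fun y : ℝ => C * |y - x| ^ γ :=
      continuous_const.mul ((continuous_id.sub continuous_const).abs.rpow_const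
        fun _ => .inr hγ.le)
    simpa [zero_rpow hγ.ne'] using (hcont.tendsto x).mono_left nhdsWithin_le_nhds
  exact tendsto_iff_dist_tendsto_zero.2 <| squeeze_zero' (.of_forall fun _ => dist_nonneg)
    (eventually_nhdsWithin_of_forall hdist) hlim

section Kernel

variable {γ a b c t t' M : ℝ} {g : ℝ → ℝ}

theorem intervalIntegrable_sub_rpow (hγ : 0 < γ) (t a b : ℝ) :
    IntervalIntegrable (fun s => (t - s) ^ (γ - 1)) volume a b := by
  simpa using (intervalIntegrable_rpow' (r := γ - 1) (by linarith) (a := t - a)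
    (b := t - b)).comp_sub_left t

theorem integral_sub_rpow (hγ : 0 < γ) (t a b : ℝ) :
    ∫ s in a..b, (t - s) ^ (γ - 1) = ((t - a) ^ γ - (t - b) ^ γ) / γ := by
  rw [integral_comp_sub_left (fun x => x ^ (γ - 1)), integral_rpow (.inl (by linarith)),
    sub_add_cancel]

theorem intervalIntegrable_sub_rpow_mul (hγ : 0 < γ) (t : ℝ) (hab : a ≤ b)
    (hg : ContinuousOn g (Icc a b)) :
    IntervalIntegrable (fun s => (t - s) ^ (γ - 1) * g s) volume a b :=
  (intervalIntegrable_sub_rpow hγ t a b).mul_continuousOn (by rwa [uIcc_of_le hab])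

theorem abs_integral_sub_rpow_mul_le (hγ : 0 < γ) (hat : a ≤ t)
    (hM : ∀ s ∈ Icc a t, |g s| ≤ M) :
    |∫ s in a..t, (t - s) ^ (γ - 1) * g s| ≤ M * (t - a) ^ γ / γ := by
  have hbound : ∀ s ∈ Icc a t, |(t - s) ^ (γ - 1) * g s| ≤ (t - s) ^ (γ - 1) * M := by
    intro s hs
    have hk : 0 ≤ (t - s) ^ (γ - 1) := rpow_nonneg (by linarith [hs.2]) _
    rw [abs_mul, abs_of_nonneg hk]
    exact mul_le_mul_of_nonneg_left (hM s hs) hk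
  calc |∫ s in a..t, (t - s) ^ (γ - 1) * g s|
      ≤ ∫ s in a..t, (t - s) ^ (γ - 1) * M :=
        norm_integral_le_of_norm_le hat
          (.of_forall fun s hs => (norm_eq_abs _).trans_le (hbound s (Ioc_subset_Icc_self hs)))
          ((intervalIntegrable_sub_rpow hγ t a t).mul_const M)
    _ = M * (t - a) ^ γ / γ := by
        rw [intervalIntegral.integral_mul_const, integral_sub_rpow hγ, sub_self, zero_rpow hγ.ne']
        ring

theorem abs_integral_sub_rpow_mul_sub_integral_le (hγ : 0 < γ) (hγ₁ : γ ≤ 1) (hab : a ≤ b)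
    (hbt : b ≤ t) (htt' : t ≤ t') (hg : ContinuousOn g (Icc a b)) (hM : ∀ s ∈ Icc a b, |g s| ≤ M) :
    |(∫ s in a..b, (t' - s) ^ (γ - 1) * g s) - ∫ s in a..b, (t - s) ^ (γ - 1) * g s|
      ≤ M * (t' - t) ^ γ / γ := by
  have hM0 : 0 ≤ M := (abs_nonneg _).trans (hM a ⟨le_rfl, hab⟩)
  rw [← integral_sub (intervalIntegrable_sub_rpow_mul hγ t' hab hg)
    (intervalIntegrable_sub_rpow_mul hγ t hab hg)]
  refine (abs_integral_le_integral_abs hab).trans ?_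
  calc ∫ s in a..b, |(t' - s) ^ (γ - 1) * g s - (t - s) ^ (γ - 1) * g s|
      ≤ ∫ s in a..b, ((t - s) ^ (γ - 1) - (t' - s) ^ (γ - 1)) * M := by
        refine integral_mono_on_of_le_Ioo hab
          ((intervalIntegrable_sub_rpow_mul hγ t' hab hg).sub
            (intervalIntegrable_sub_rpow_mul hγ t hab hg)).abs
          (((intervalIntegrable_sub_rpow hγ t a b).sub
            (intervalIntegrable_sub_rpow hγ t' a b)).mul_const M) fun s hs => ?_
        have hk : (t' - s) ^ (γ - 1) ≤ (t - s) ^ (γ - 1) :=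
          rpow_le_rpow_of_nonpos (by linarith [hs.2]) (by linarith) (by linarith)
        rw [← sub_mul, abs_mul, abs_of_nonpos (sub_nonpos.2 hk), neg_sub]
        exact mul_le_mul_of_nonneg_left (hM s (Ioo_subset_Icc_self hs)) (sub_nonneg.2 hk)
    _ = ((t - a) ^ γ - (t' - a) ^ γ + ((t' - b) ^ γ - (t - b) ^ γ)) / γ * M := by
        rw [intervalIntegral.integral_mul_const, integral_sub (intervalIntegrable_sub_rpow hγ t a b)
          (intervalIntegrable_sub_rpow hγ t' a b), integral_sub_rpow hγ, integral_sub_rpow hγ]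
        ring
    _ ≤ (t' - t) ^ γ / γ * M := by
        gcongr
        have hmono : (t - a) ^ γ ≤ (t' - a) ^ γ := by gcongr; linarith
        have hsub : (t' - b) ^ γ ≤ (t - b) ^ γ + (t' - t) ^ γ := by
          simpa using rpow_add_le_add_rpow (by linarith : 0 ≤ t - b)
            (by linarith : 0 ≤ t' - t) hγ.le hγ₁
        linarith
    _ = M * (t' - t) ^ γ / γ := by ring

theorem abs_integral_sub_rpow_mul_sub_integral_le_two_mul (hγ : 0 < γ) (hγ₁ : γ ≤ 1) (hat : a ≤ t)
    (htt' : t ≤ t') (hg : ContinuousOn g (Icc a t')) (hM : ∀ s ∈ Icc a t', |g s| ≤ M) :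
    |(∫ s in a..t', (t' - s) ^ (γ - 1) * g s) - ∫ s in a..t, (t - s) ^ (γ - 1) * g s|
      ≤ 2 * M * (t' - t) ^ γ / γ := by
  have hsub₁ : Icc a t ⊆ Icc a t' := Icc_subset_Icc_right htt'
  have hsub₂ : Icc t t' ⊆ Icc a t' := Icc_subset_Icc_left hat
  rw [← integral_add_adjacent_intervals
    (intervalIntegrable_sub_rpow_mul hγ t' hat (hg.mono hsub₁))
    (intervalIntegrable_sub_rpow_mul hγ t' htt' (hg.mono hsub₂)), add_sub_right_comm]
  calc _ ≤ M * (t' - t) ^ γ / γ + M * (t' - t) ^ γ / γ :=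
        (abs_add_le _ _).trans (add_le_add
          (abs_integral_sub_rpow_mul_sub_integral_le hγ hγ₁ hat le_rfl htt' (hg.mono hsub₁)
            fun s hs => hM s (hsub₁ hs))
          (abs_integral_sub_rpow_mul_le hγ htt' fun s hs => hM s (hsub₂ hs)))
    _ = 2 * M * (t' - t) ^ γ / γ := by ring

theorem continuousOn_integral_sub_rpow_mul (hγ : 0 < γ) (hγ₁ : γ ≤ 1)
    (hg : ContinuousOn g (Icc a c)) :
    ContinuousOn (fun t => ∫ s in a..t, (t - s) ^ (γ - 1) * g s) (Icc a c) := by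
  obtain ⟨M, hM⟩ := isCompact_Icc.exists_bound_of_continuousOn hg
  refine continuousOn_of_abs_sub_le_mul_rpow (C := 2 * M / γ) hγ fun t ht t' ht' htt' => ?_
  have := abs_integral_sub_rpow_mul_sub_integral_le_two_mul hγ hγ₁ ht.1 htt'
    (hg.mono (Icc_subset_Icc_right ht'.2)) fun s hs => by
      simpa using hM s (Icc_subset_Icc_right ht'.2 hs)
  linarith [show 2 * M * (t' - t) ^ γ / γ = 2 * M / γ * (t' - t) ^ γ by ring]

theorem continuousOn_integral_sub_rpow_mul_Ici (hγ : 0 < γ) (hγ₁ : γ ≤ 1) (hab : a ≤ b)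
    (hg : ContinuousOn g (Icc a b)) :
    ContinuousOn (fun t => ∫ s in a..b, (t - s) ^ (γ - 1) * g s) (Ici b) := by
  obtain ⟨M, hM⟩ := isCompact_Icc.exists_bound_of_continuousOn hg
  refine continuousOn_of_abs_sub_le_mul_rpow (C := M / γ) hγ fun t ht t' _ htt' => ?_
  have := abs_integral_sub_rpow_mul_sub_integral_le hγ hγ₁ hab ht htt' hg fun s hs => by
    simpa using hM s hs
  linarith [show M * (t' - t) ^ γ / γ = M / γ * (t' - t) ^ γ by ring]

end Kernel

theorem exists_continuous_eq_add_integral_sub_rpow_mul {γ a b ε x : ℝ} {g F : ℝ → ℝ}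
    {L : ℝ≥0} (hγ : 0 < γ) (hγ₁ : γ ≤ 1) (hab : a ≤ b) (hε : 0 ≤ ε)
    (hg : ContinuousOn g (Icc a b)) (hF : LipschitzWith L F) (hL : L * ε ^ γ < γ * Gamma γ) :
    ∃ w : ℝ → ℝ, Continuous w ∧ ∀ t ∈ Icc b (b + ε), w t = x + 1 / Gamma γ *
      ((∫ s in a..b, (t - s) ^ (γ - 1) * g s) + ∫ s in b..t, (t - s) ^ (γ - 1) * F (w s)) := by
  have hΓ : 0 < Gamma γ := Gamma_pos_of_pos hγ
  have hI : b ≤ b + ε := le_add_of_nonneg_right hε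
  let ψ (v : C(Icc b (b + ε), ℝ)) (t : ℝ) : ℝ := x + 1 / Gamma γ *
    ((∫ s in a..b, (t - s) ^ (γ - 1) * g s) +
      ∫ s in b..t, (t - s) ^ (γ - 1) * F (ContinuousMap.IccExtend hI v s))
  have hψ (v : C(Icc b (b + ε), ℝ)) : ContinuousOn (ψ v) (Icc b (b + ε)) :=
    continuousOn_const.add <| continuousOn_const.mul <|
      ((continuousOn_integral_sub_rpow_mul_Ici hγ hγ₁ hab hg).mono Icc_subset_Ici_self).add
        (continuousOn_integral_sub_rpow_mul hγ hγ₁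
          (hF.continuous.comp (ContinuousMap.IccExtend hI v).continuous).continuousOn)
  let Φ (v : C(Icc b (b + ε), ℝ)) : C(Icc b (b + ε), ℝ) :=
    ⟨(Icc b (b + ε)).domRestrict (ψ v), (hψ v).domRestrict⟩
  let q : ℝ≥0 := ⟨L * ε ^ γ / (γ * Gamma γ), by positivity⟩
  have hΦ : ContractingWith q Φ := by
    refine ⟨by rw [← NNReal.coe_lt_coe]; exact (div_lt_one (by positivity)).2 hL,
      .of_dist_le_mul fun v w => (ContinuousMap.dist_le (by positivity)).2 fun t => ?_⟩
    have hFvw : ∀ s ∈ Icc (b : ℝ) t, |F (ContinuousMap.IccExtend hI v s) -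
        F (ContinuousMap.IccExtend hI w s)| ≤ L * dist v w := fun s _ =>
      (hF.dist_le_mul _ _).trans (mul_le_mul_of_nonneg_left
        (ContinuousMap.dist_apply_le_dist (projIcc b (b + ε) hI s)) L.2)
    have hint (v : C(Icc b (b + ε), ℝ)) : IntervalIntegrable
        (fun s => (t - s) ^ (γ - 1) * F (ContinuousMap.IccExtend hI v s)) volume b t :=
      intervalIntegrable_sub_rpow_mul hγ _ t.2.1
        (hF.continuous.comp (ContinuousMap.IccExtend hI v).continuous).continuousOn
    have hsub : Φ v t - Φ w t = 1 / Gamma γ * ∫ s in b..t, (t - s) ^ (γ - 1) *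
        (F (ContinuousMap.IccExtend hI v s) - F (ContinuousMap.IccExtend hI w s)) := by
      simp_rw [mul_sub]
      rw [integral_sub (hint v) (hint w)]
      simp only [Φ, ψ, ContinuousMap.coe_mk, domRestrict_apply]
      ring
    have htb : (t - b) ^ γ ≤ ε ^ γ := by gcongr <;> linarith [t.2.1, t.2.2]
    calc dist (Φ v t) (Φ w t)
        = 1 / Gamma γ * |∫ s in b..t, (t - s) ^ (γ - 1) *
            (F (ContinuousMap.IccExtend hI v s) - F (ContinuousMap.IccExtend hI w s))| := by
          rw [dist_eq, hsub, abs_mul, abs_of_pos (by positivity)]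
      _ ≤ 1 / Gamma γ * (L * dist v w * ε ^ γ / γ) := by
          gcongr
          exact (abs_integral_sub_rpow_mul_le hγ t.2.1 hFvw).trans (by gcongr)
      _ = q * dist v w := by
          change _ = L * ε ^ γ / (γ * Gamma γ) * dist v w
          field_simp
  obtain ⟨v, hv⟩ : ∃ v, Φ v = v := ⟨_, ContractingWith.fixedPoint_isFixedPt (f := Φ) hΦ⟩
  refine ⟨ContinuousMap.IccExtend hI v, (ContinuousMap.IccExtend hI v).continuous,
    fun t ht => ?_⟩
  calc ContinuousMap.IccExtend hI v t = Φ v ⟨t, ht⟩ := by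
        rw [hv]; exact IccExtend_of_mem hI v ht
    _ = _ := rfl

section Gronwall

variable {γ a b e ε C : ℝ} {L : ℝ≥0} {d g : ℝ → ℝ}

theorem eqOn_zero_of_eq_mul_integral_of_eqOn_zero (hγ : 0 < γ) (hab : a ≤ b) (hε : 0 ≤ ε)
    (hbe : e ≤ b + ε) (hq : |C| * L * ε ^ γ < γ)
    (hd : ContinuousOn d (Icc a e)) (hg : ContinuousOn g (Icc a e))
    (hgd : ∀ s ∈ Icc a e, |g s| ≤ L * |d s|)
    (heq : ∀ t ∈ Icc a e, d t = C * ∫ s in a..t, (t - s) ^ (γ - 1) * g s)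
    (hzero : ∀ t ∈ Icc a e, t ≤ b → d t = 0) : EqOn d 0 (Icc a e) := by
  rcases lt_or_ge e a with hea | hae
  · exact fun t ht => absurd (ht.1.trans ht.2) hea.not_ge
  obtain ⟨s₀, hs₀, hmax⟩ := isCompact_Icc.exists_isMaxOn (nonempty_Icc.2 hae) hd.abs
  rw [isMaxOn_iff] at hmax
  set q := |C| * L * ε ^ γ / γ
  -- on `[b, e]` the kernel has mass at most `ε ^ γ / γ`, so `max |d| ≤ q * max |d|` with `q < 1`
  have hle : ∀ t ∈ Icc a e, |d t| ≤ q * |d s₀| := by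
    intro t ht
    rcases le_or_gt t b with htb | hbt
    · rw [hzero t ht htb, abs_zero]
      exact mul_nonneg (by positivity) (abs_nonneg _)
    have hsub₁ : Icc a b ⊆ Icc a e := Icc_subset_Icc_right (hbt.le.trans ht.2)
    have hsub₂ : Icc b t ⊆ Icc a e := Icc_subset_Icc hab ht.2
    have hhist : ∫ s in a..b, (t - s) ^ (γ - 1) * g s = 0 := by
      refine (integral_congr fun s hs => ?_).trans integral_zero
      rw [uIcc_of_le hab] at hs
      have := hgd s (hsub₁ hs)
      rw [hzero s (hsub₁ hs) hs.2, abs_zero, mul_zero, abs_nonpos_iff] at this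
      simp [this]
    rw [heq t ht, ← integral_add_adjacent_intervals
      (intervalIntegrable_sub_rpow_mul hγ t hab (hg.mono hsub₁))
      (intervalIntegrable_sub_rpow_mul hγ t hbt.le (hg.mono hsub₂)), hhist, zero_add, abs_mul]
    calc |C| * |∫ s in b..t, (t - s) ^ (γ - 1) * g s|
        ≤ |C| * (L * |d s₀| * (t - b) ^ γ / γ) := by
          gcongr
          exact abs_integral_sub_rpow_mul_le hγ hbt.le fun s hs =>
            (hgd s (hsub₂ hs)).trans (mul_le_mul_of_nonneg_left (hmax s (hsub₂ hs)) L.2)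
      _ ≤ |C| * (L * |d s₀| * ε ^ γ / γ) := by gcongr; linarith [ht.2]
      _ = q * |d s₀| := by ring
  have hq1 : q < 1 := (div_lt_one hγ).2 hq
  have hm : |d s₀| ≤ 0 := by nlinarith [hle s₀ hs₀, abs_nonneg (d s₀)]
  exact fun t ht => abs_nonpos_iff.1 ((hmax t ht).trans hm)

theorem eqOn_zero_of_eq_mul_integral (hγ : 0 < γ) {τ : ℝ}
    (hd : ContinuousOn d (Icc a τ)) (hg : ContinuousOn g (Icc a τ))
    (hgd : ∀ s ∈ Icc a τ, |g s| ≤ L * |d s|)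
    (heq : ∀ t ∈ Icc a τ, d t = C * ∫ s in a..t, (t - s) ^ (γ - 1) * g s) :
    EqOn d 0 (Icc a τ) := by
  obtain ⟨ε, hq, hε⟩ := ((eventually_mul_rpow_lt hγ (|C| * L) hγ).and self_mem_nhdsWithin).exists
  have hstep : ∀ n : ℕ, ∀ t ∈ Icc a τ, t ≤ a + n * ε → d t = 0 := by
    intro n
    induction n with
    | zero =>
      intro t ht htn
      obtain rfl : t = a := le_antisymm (by simpa using htn) ht.1
      rw [heq t ht, integral_same, mul_zero]
    | succ n ih =>
      intro t ht htn
      have hsub : Icc a (min τ (a + (n + 1) * ε)) ⊆ Icc a τ :=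
        Icc_subset_Icc_right (min_le_left _ _)
      refine eqOn_zero_of_eq_mul_integral_of_eqOn_zero hγ
        (le_add_of_nonneg_right (by positivity)) (mem_Ioi.1 hε).le
        (by rw [add_assoc, ← add_one_mul]; exact min_le_right _ _) hq
        (hd.mono hsub) (hg.mono hsub) (fun s hs => hgd s (hsub hs))
        (fun s hs => heq s (hsub hs)) (fun s hs hsn => ih s (hsub hs) hsn)
        ⟨ht.1, le_min ht.2 (by exact_mod_cast htn)⟩
  obtain ⟨n, hn⟩ := exists_nat_ge ((τ - a) / ε)
  exact fun t ht => hstep n t ht (by rw [div_le_iff₀ (mem_Ioi.1 hε)] at hn; linarith [ht.2])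

end Gronwall

structure IsSolOn (γ : ℝ) (f : ℝ → ℝ) (D : Set ℝ) (u₀ : ℝ) (u : ℝ → ℝ) (b : ℝ) : Prop where
  continuousOn : ContinuousOn u (Icc 0 b)
  mapsTo : MapsTo u (Icc 0 b) D
  eq : ∀ t ∈ Icc 0 b, u t = u₀ + 1 / Gamma γ * ∫ s in (0:ℝ)..t, (t - s) ^ (γ - 1) * f (u s)

section Solutions

variable {γ u₀ b : ℝ} {f : ℝ → ℝ} {D : Set ℝ} {u : ℝ → ℝ} {T : ℝ≥0∞}

theorem IsSolUpTo.isSolOn (h : IsSolUpTo γ f D u₀ u T) (hb : ENNReal.ofReal b < T) :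
    IsSolOn γ f D u₀ u b := by
  have hsub : Icc 0 b ⊆ {t : ℝ | 0 ≤ t ∧ ENNReal.ofReal t < T} :=
    fun t ht => ⟨ht.1, (ENNReal.ofReal_le_ofReal ht.2).trans_lt hb⟩
  exact ⟨h.2.1.mono hsub, fun t ht => h.2.2.1 t ht.1 (hsub ht).2,
    fun t ht => h.2.2.2 t ht.1 (hsub ht).2⟩

theorem IsSolOn.isSolUpTo (h : IsSolOn γ f D u₀ u b) (hb : 0 ≤ b) :
    IsSolUpTo γ f D u₀ u (ENNReal.ofReal b) := by
  have hsub : {t : ℝ | 0 ≤ t ∧ ENNReal.ofReal t < ENNReal.ofReal b} ⊆ Icc 0 b :=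
    fun t ht => ⟨ht.1, ((ENNReal.ofReal_lt_ofReal_iff_of_nonneg ht.1).1 ht.2).le⟩
  refine ⟨?_, h.continuousOn.mono hsub, fun t h0 ht => h.mapsTo (hsub ⟨h0, ht⟩),
    fun t h0 ht => h.eq t (hsub ⟨h0, ht⟩)⟩
  simpa using h.eq 0 ⟨le_rfl, hb⟩

theorem le_maxTime (h : IsSolUpTo γ f D u₀ u T) : T ≤ maxTime γ f D u₀ :=
  le_sSup ⟨u, h⟩

theorem IsSolOn.piecewise (hγ : 0 < γ) (hfD : ContinuousOn f D) {c : ℝ} {w : ℝ → ℝ}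
    (hb : 0 ≤ b) (hbc : b ≤ c) (hu : IsSolOn γ f D u₀ u b) (hw : ContinuousOn w (Icc b c))
    (hwD : MapsTo w (Icc b c) D)
    (hweq : ∀ t ∈ Icc b c, w t = u₀ + 1 / Gamma γ * ((∫ s in (0:ℝ)..b, (t - s) ^ (γ - 1) * f (u s))
      + ∫ s in b..t, (t - s) ^ (γ - 1) * f (w s))) :
    IsSolOn γ f D u₀ (fun t => if t ≤ b then u t else w t) c := by
  set v := fun t => if t ≤ b then u t else w t
  have hwb : w b = u b := by
    rw [hweq b ⟨le_rfl, hbc⟩, integral_same, add_zero, ← hu.eq b ⟨hb, le_rfl⟩]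
  have hvu : EqOn v u (Icc 0 b) := fun t ht => if_pos ht.2
  have hvw : EqOn v w (Icc b c) := fun t ht => by
    rcases ht.1.eq_or_lt with rfl | hlt
    · simp [v, hwb]
    · exact if_neg hlt.not_ge
  have hunion : Icc 0 b ∪ Icc b c = Icc 0 c := Icc_union_Icc_eq_Icc hb hbc
  have hcont : ContinuousOn v (Icc 0 c) := hunion ▸
    (hu.continuousOn.congr hvu).union_of_isClosed (hw.congr hvw) isClosed_Icc isClosed_Icc
  have hmaps : MapsTo v (Icc 0 c) D :=
    hunion ▸ (hu.mapsTo.congr hvu.symm).union (hwD.congr hvw.symm)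
  refine ⟨hcont, hmaps, fun t ht => ?_⟩
  have hfv : ContinuousOn (fun s => f (v s)) (Icc 0 c) := hfD.comp hcont hmaps
  rcases le_or_gt t b with htb | hbt
  · rw [hvu ⟨ht.1, htb⟩, hu.eq t ⟨ht.1, htb⟩]
    congr 2
    refine integral_congr fun s hs => ?_
    rw [uIcc_of_le ht.1] at hs
    simp only [hvu ⟨hs.1, hs.2.trans htb⟩]
  · rw [hvw ⟨hbt.le, ht.2⟩, hweq t ⟨hbt.le, ht.2⟩, ← integral_add_adjacent_intervals
      (intervalIntegrable_sub_rpow_mul hγ t hb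
        (hfv.mono (Icc_subset_Icc_right (hbt.le.trans ht.2))))
      (intervalIntegrable_sub_rpow_mul hγ t hbt.le (hfv.mono (Icc_subset_Icc hb ht.2)))]
    congr 3
    · refine integral_congr fun s hs => ?_
      rw [uIcc_of_le hb] at hs
      simp only [hvu hs]
    · refine integral_congr fun s hs => ?_
      rw [uIcc_of_le hbt.le] at hs
      simp only [hvw ⟨hs.1, hs.2.trans ht.2⟩]

theorem IsSolOn.eqOn (hγ : 0 < γ) (hf : LocallyLipschitzOn D f) {u₁ u₂ : ℝ → ℝ}
    (h₁ : IsSolOn γ f D u₀ u₁ b) (h₂ : IsSolOn γ f D u₀ u₂ b) : EqOn u₁ u₂ (Icc 0 b) := by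
  set S := u₁ '' Icc 0 b ∪ u₂ '' Icc 0 b
  have hS : IsCompact S := (isCompact_Icc.image_of_continuousOn h₁.continuousOn).union
    (isCompact_Icc.image_of_continuousOn h₂.continuousOn)
  obtain ⟨L, hL⟩ := (hf.mono (union_subset h₁.mapsTo.image_subset h₂.mapsTo.image_subset))
    |>.exists_lipschitzOnWith_of_compact hS
  have hfu₁ : ContinuousOn (fun s => f (u₁ s)) (Icc 0 b) :=
    hf.continuousOn.comp h₁.continuousOn h₁.mapsTo
  have hfu₂ : ContinuousOn (fun s => f (u₂ s)) (Icc 0 b) :=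
    hf.continuousOn.comp h₂.continuousOn h₂.mapsTo
  refine fun t ht => sub_eq_zero.1 <| eqOn_zero_of_eq_mul_integral (d := u₁ - u₂)
    (g := fun s => f (u₁ s) - f (u₂ s)) (C := 1 / Gamma γ) (L := L) hγ
    (h₁.continuousOn.sub h₂.continuousOn) (hfu₁.sub hfu₂) (fun s hs => ?_) (fun s hs => ?_) ht
  · simpa only [dist_eq, Pi.sub_apply] using
      hL.dist_le_mul _ (mem_union_left _ (mem_image_of_mem u₁ hs))
        _ (mem_union_right _ (mem_image_of_mem u₂ hs))
  · simp_rw [Pi.sub_apply, mul_sub]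
    rw [h₁.eq s hs, h₂.eq s hs, integral_sub
      (intervalIntegrable_sub_rpow_mul hγ s hs.1 (hfu₁.mono (Icc_subset_Icc_right hs.2)))
      (intervalIntegrable_sub_rpow_mul hγ s hs.1 (hfu₂.mono (Icc_subset_Icc_right hs.2)))]
    ring

theorem IsSolOn.exists_extension (hγ : 0 < γ) (hγ₁ : γ ≤ 1) (hfD : ContinuousOn f D)
    {δ ε M : ℝ} {K : ℝ≥0} (hb : 0 ≤ b) (hε : 0 ≤ ε) (hδ : 0 ≤ δ) (hu : IsSolOn γ f D u₀ u b)
    (hJD : Icc (u b - δ) (u b + δ) ⊆ D) (hK : LipschitzOnWith K f (Icc (u b - δ) (u b + δ)))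
    (hfM : ∀ y ∈ Icc (u b - δ) (u b + δ), |f y| ≤ M) (huM : ∀ t ∈ Icc 0 b, |f (u t)| ≤ M)
    (hεK : K * ε ^ γ < γ * Gamma γ) (hεM : 2 * M * ε ^ γ ≤ γ * Gamma γ * δ) :
    ∃ v, IsSolOn γ f D u₀ v (b + ε) := by
  have hΓ : 0 < Gamma γ := Gamma_pos_of_pos hγ
  have hJ : u b - δ ≤ u b + δ := by linarith
  -- freeze `f` outside `J = [u b - δ, u b + δ]`, solve, and check that the solution stays in `J`
  set F := fun y => f (projIcc (u b - δ) (u b + δ) hJ y)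
  have hF : LipschitzWith K F := .of_dist_le_mul fun y z =>
    (hK.dist_le_mul _ (projIcc _ _ hJ y).2 _ (projIcc _ _ hJ z).2).trans
      (mul_le_mul_of_nonneg_left (abs_projIcc_sub_projIcc hJ) K.2)
  have hfu : ContinuousOn (fun s => f (u s)) (Icc 0 b) := hfD.comp hu.continuousOn hu.mapsTo
  obtain ⟨w, hwc, hweq⟩ :=
    exists_continuous_eq_add_integral_sub_rpow_mul (x := u₀) hγ hγ₁ hb hε hfu hF hεK
  have hwJ : MapsTo w (Icc b (b + ε)) (Icc (u b - δ) (u b + δ)) := by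
    intro t ht
    have hdiff : w t - u b = 1 / Gamma γ *
        (((∫ s in (0:ℝ)..b, (t - s) ^ (γ - 1) * f (u s)) -
          ∫ s in (0:ℝ)..b, (b - s) ^ (γ - 1) * f (u s)) +
        ∫ s in b..t, (t - s) ^ (γ - 1) * F (w s)) := by
      rw [hweq t ht, hu.eq b ⟨hb, le_rfl⟩]
      ring
    have hhist := abs_integral_sub_rpow_mul_sub_integral_le hγ hγ₁ hb le_rfl ht.1 hfu huM
    have hnew := abs_integral_sub_rpow_mul_le hγ ht.1 fun s _ => hfM _ (projIcc _ _ hJ (w s)).2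
    have hM : 0 ≤ M := (abs_nonneg _).trans (huM b ⟨hb, le_rfl⟩)
    have htb : (t - b) ^ γ ≤ ε ^ γ := by gcongr <;> linarith [ht.1, ht.2]
    have hdist : |w t - u b| ≤ δ := calc
      |w t - u b| ≤ 1 / Gamma γ * (M * (t - b) ^ γ / γ + M * (t - b) ^ γ / γ) := by
        rw [hdiff, abs_mul, abs_of_pos (by positivity)]
        gcongr
        exact (abs_add_le _ _).trans (add_le_add hhist hnew)
      _ = 2 * M * (t - b) ^ γ / (γ * Gamma γ) := by ring
      _ ≤ 2 * M * ε ^ γ / (γ * Gamma γ) := by gcongr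
      _ ≤ δ := by rwa [div_le_iff₀ (by positivity), mul_comm δ]
    exact ⟨by linarith [(abs_le.1 hdist).1], by linarith [(abs_le.1 hdist).2]⟩
  refine ⟨_, hu.piecewise hγ hfD hb (le_add_of_nonneg_right hε) hwc.continuousOn
    (hwJ.mono_right hJD) fun t ht => ?_⟩
  rw [hweq t ht]
  congr 3
  refine integral_congr fun s hs => ?_
  rw [uIcc_of_le ht.1] at hs
  simp only [F, projIcc_of_mem hJ (hwJ ⟨hs.1, hs.2.trans ht.2⟩)]

theorem exists_pos_forall_isSolOn_extension (hγ : 0 < γ) (hγ₁ : γ ≤ 1)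
    (hf : LocallyLipschitzOn D f) {S : Set ℝ} (hS : IsCompact S) (hSD : S ⊆ D) {δ : ℝ}
    (hδ : 0 < δ) :
    ∃ ε > 0, ∀ b u, 0 ≤ b → IsSolOn γ f D u₀ u b → MapsTo u (Icc 0 b) S →
      Icc (u b - δ) (u b + δ) ⊆ S → ∃ v, IsSolOn γ f D u₀ v (b + ε) := by
  obtain ⟨K, hK⟩ := (hf.mono hSD).exists_lipschitzOnWith_of_compact hS
  obtain ⟨M, hM⟩ := hS.exists_bound_of_continuousOn (hf.continuousOn.mono hSD)
  have hΓ : 0 < Gamma γ := Gamma_pos_of_pos hγ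
  obtain ⟨ε, ⟨hεK, hεM⟩, hε⟩ :=
    (((eventually_mul_rpow_lt hγ K (by positivity : 0 < γ * Gamma γ)).and
      (eventually_mul_rpow_lt hγ (2 * M) (by positivity : 0 < γ * Gamma γ * δ))).and
      self_mem_nhdsWithin).exists
  refine ⟨ε, hε, fun b u hb hu huS hJS => hu.exists_extension hγ hγ₁ hf.continuousOn hb
    (le_of_lt hε) hδ.le (hJS.trans hSD) (hK.mono hJS) (fun y hy => by simpa using hM y (hJS hy))
    (fun t ht => by simpa using hM _ (huS ht)) hεK hεM.le⟩

theorem exists_pos_isSolOn (hγ : 0 < γ) (hγ₁ : γ ≤ 1) (hf : LocallyLipschitzOn D f)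
    (hD : D ∈ 𝓝 u₀) : ∃ ε > 0, ∃ u, IsSolOn γ f D u₀ u ε := by
  obtain ⟨δ, hδ, hδD⟩ := Metric.nhds_basis_closedBall.mem_iff.1 hD
  obtain ⟨ε, hε, hext⟩ :=
    exists_pos_forall_isSolOn_extension hγ hγ₁ hf (isCompact_closedBall u₀ δ) hδD hδ
  have hu₀ : u₀ ∈ Metric.closedBall u₀ δ := Metric.mem_closedBall_self hδ.le
  have hconst : IsSolOn γ f D u₀ (fun _ => u₀) 0 := by
    refine ⟨continuousOn_const, fun _ _ => hδD hu₀, fun t ht => ?_⟩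
    obtain rfl : t = 0 := le_antisymm ht.2 ht.1
    simp
  obtain ⟨v, hv⟩ := hext 0 _ le_rfl hconst (fun _ _ => hu₀) (Real.closedBall_eq_Icc ▸ le_rfl)
  exact ⟨ε, hε, v, by simpa using hv⟩

theorem isSolUpTo_of_forall_exists_eqOn (hT : 0 < T)
    (h : ∀ t, 0 ≤ t → ENNReal.ofReal t < T → ∃ T' w, IsSolUpTo γ f D u₀ w T' ∧
      ENNReal.ofReal t < T' ∧
      ∀ s, 0 ≤ s → ENNReal.ofReal s < T → ENNReal.ofReal s < T' → u s = w s) :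
    IsSolUpTo γ f D u₀ u T := by
  refine ⟨?_, fun t ht => ?_, fun t h0 ht => ?_, fun t h0 ht => ?_⟩
  · obtain ⟨T', w, hw, h0', heq⟩ := h 0 le_rfl (by simpa using hT)
    rw [heq 0 le_rfl (by simpa using hT) h0', hw.1]
  · obtain ⟨T', w, hw, htT', heq⟩ := h t ht.1 ht.2
    have hnhds : {s : ℝ | 0 ≤ s ∧ ENNReal.ofReal s < T} ∩ {s | ENNReal.ofReal s < T'} ∈
        𝓝[{s : ℝ | 0 ≤ s ∧ ENNReal.ofReal s < T}] t :=
      inter_mem self_mem_nhdsWithin <| mem_nhdsWithin_of_mem_nhds <|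
        (isOpen_lt ENNReal.continuous_ofReal continuous_const).mem_nhds htT'
    exact ((hw.2.1 t ⟨ht.1, htT'⟩).mono_of_mem_nhdsWithin
      (mem_of_superset hnhds fun s hs => ⟨hs.1.1, hs.2⟩)).congr_of_eventuallyEq
      (mem_of_superset hnhds fun s hs => heq s hs.1.1 hs.1.2 hs.2) (heq t ht.1 ht.2 htT')
  · obtain ⟨T', w, hw, htT', heq⟩ := h t h0 ht
    rw [heq t h0 ht htT']
    exact hw.2.2.1 t h0 htT'
  · obtain ⟨T', w, hw, htT', heq⟩ := h t h0 ht
    have hle : ∀ s ∈ Icc 0 t, ENNReal.ofReal s ≤ ENNReal.ofReal t :=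
      fun s hs => ENNReal.ofReal_le_ofReal hs.2
    rw [heq t h0 ht htT', hw.2.2.2 t h0 htT']
    congr 2
    refine integral_congr fun s hs => ?_
    rw [uIcc_of_le h0] at hs
    simp only [heq s hs.1 ((hle s hs).trans_lt ht) ((hle s hs).trans_lt htT')]

theorem exists_isSolUpTo_maxTime (hγ : 0 < γ) (hf : LocallyLipschitzOn D f)
    (hpos : 0 < maxTime γ f D u₀) : ∃ u, IsSolUpTo γ f D u₀ u (maxTime γ f D u₀) := by
  have hsol : ∀ t : ℝ, ENNReal.ofReal t < maxTime γ f D u₀ →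
      ∃ T w, IsSolUpTo γ f D u₀ w T ∧ ENNReal.ofReal t < T := fun t ht => by
    obtain ⟨T, ⟨w, hw⟩, hT⟩ := lt_sSup_iff.1 ht
    exact ⟨T, w, hw, hT⟩
  choose! T w hw hT using hsol
  refine ⟨fun t => w t t, isSolUpTo_of_forall_exists_eqOn hpos fun t _ ht =>
    ⟨T t, w t, hw t ht, hT t ht, fun s hs hsT hsT' => ?_⟩⟩
  exact ((hw s hsT).isSolOn (hT s hsT)).eqOn hγ hf ((hw t ht).isSolOn hsT') ⟨hs, le_rfl⟩

end Solutions

theorem exists_isCompact_mapsTo_of_liminf_ne_of_limsup_ne {u : ℝ → ℝ} {a τ α β : ℝ}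
    (haτ : a < τ) (hu : ContinuousOn u (Ico a τ)) (huD : MapsTo u (Ico a τ) (Ioo α β))
    (hα : liminf u (𝓝[<] τ) ≠ α) (hβ : limsup u (𝓝[<] τ) ≠ β) :
    ∃ K, IsCompact K ∧ K ⊆ Ioo α β ∧ MapsTo u (Ico a τ) K := by
  have hev : ∀ᶠ t in 𝓝[<] τ, u t ∈ Ioo α β := mem_of_superset (Ico_mem_nhdsLT haτ) huD
  have hbdd_le : IsBoundedUnder (· ≤ ·) (𝓝[<] τ) u :=
    ⟨β, eventually_map.2 (hev.mono fun _ h => h.2.le)⟩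
  have hbdd_ge : IsBoundedUnder (· ≥ ·) (𝓝[<] τ) u :=
    ⟨α, eventually_map.2 (hev.mono fun _ h => h.1.le)⟩
  obtain ⟨A, hαA, hA⟩ := exists_between <| lt_of_le_of_ne
    (le_liminf_of_le hbdd_le.isCoboundedUnder_ge (hev.mono fun _ h => h.1.le)) hα.symm
  obtain ⟨B, hB, hBβ⟩ := exists_between <| lt_of_le_of_ne
    (limsup_le_of_le hbdd_ge.isCoboundedUnder_le (hev.mono fun _ h => h.2.le)) hβ
  obtain ⟨t₁, ht₁, htrap⟩ := mem_nhdsLT_iff_exists_Ioo_subset.1 <|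
    (eventually_lt_of_lt_liminf hA hbdd_ge).and (eventually_lt_of_limsup_lt hB hbdd_le)
  have ht₂ : max a t₁ < τ := max_lt haτ ht₁
  have hsub : Icc a (max a t₁) ⊆ Ico a τ := fun t ht => ⟨ht.1, ht.2.trans_lt ht₂⟩
  refine ⟨u '' Icc a (max a t₁) ∪ Icc A B,
    (isCompact_Icc.image_of_continuousOn (hu.mono hsub)).union isCompact_Icc,
    union_subset (huD.mono_left hsub).image_subset (Icc_subset_Ioo hαA hBβ), fun t ht => ?_⟩
  rcases le_or_gt t (max a t₁) with htle | hlt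
  · exact .inl (mem_image_of_mem u ⟨ht.1, htle⟩)
  · have := htrap ⟨(le_max_right a t₁).trans_lt hlt, ht.2⟩
    exact .inr ⟨this.1.le, this.2.le⟩

theorem liminf_eq_or_limsup_eq_of_maxTime_lt_top {γ α β u₀ : ℝ} {f u : ℝ → ℝ}
    (hγ : 0 < γ) (hγ₁ : γ ≤ 1) (hf : LocallyLipschitzOn (Ioo α β) f)
    (hu : IsSolUpTo γ f (Ioo α β) u₀ u (maxTime γ f (Ioo α β) u₀))
    (hpos : 0 < maxTime γ f (Ioo α β) u₀) (htop : maxTime γ f (Ioo α β) u₀ < ⊤) :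
    liminf u (𝓝[<] (maxTime γ f (Ioo α β) u₀).toReal) = α ∨
      limsup u (𝓝[<] (maxTime γ f (Ioo α β) u₀).toReal) = β := by
  set τ := (maxTime γ f (Ioo α β) u₀).toReal
  have hτ : 0 < τ := ENNReal.toReal_pos hpos.ne' htop.ne
  have hdom : ∀ t, 0 ≤ t → (ENNReal.ofReal t < maxTime γ f (Ioo α β) u₀ ↔ t < τ) :=
    fun t ht => ENNReal.ofReal_lt_iff_lt_toReal ht htop.ne
  by_contra! h
  -- a solution trapped in a compact subset of `(α, β)` can be continued past `τ`
  obtain ⟨K, hK, hKD, huK⟩ := exists_isCompact_mapsTo_of_liminf_ne_of_limsup_ne hτ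
    (hu.2.1.mono fun t ht => ⟨ht.1, (hdom t ht.1).2 ht.2⟩)
    (fun t ht => hu.2.2.1 t ht.1 ((hdom t ht.1).2 ht.2)) h.1 h.2
  obtain ⟨δ, hδ, hδK⟩ := hK.exists_cthickening_subset_open isOpen_Ioo hKD
  obtain ⟨ε, hε, hext⟩ := exists_pos_forall_isSolOn_extension (u₀ := u₀) hγ hγ₁ hf
    hK.cthickening hδK hδ
  set b := max 0 (τ - ε / 2)
  have hb : 0 ≤ b := le_max_left _ _
  have hbτ : b < τ := max_lt hτ (by linarith)
  obtain ⟨v, hv⟩ := hext b u hb (hu.isSolOn ((hdom b hb).2 hbτ))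
    (fun t ht => Metric.self_subset_cthickening _ (huK ⟨ht.1, ht.2.trans_lt hbτ⟩))
    (Real.closedBall_eq_Icc ▸ Metric.closedBall_subset_cthickening (huK ⟨hb, hbτ⟩) δ)
  have hle := le_maxTime (hv.isSolUpTo (by positivity))
  rw [ENNReal.ofReal_le_iff_le_toReal htop.ne] at hle
  linarith [le_max_right 0 (τ - ε / 2)]

theorem stmt0_general (γ α β u₀ : ℝ) (f : ℝ → ℝ)
    (hγ : γ ∈ Set.Ioo (0:ℝ) 1)
    (hf : ∀ x ∈ Set.Ioo α β, ∃ K : NNReal, ∃ s ∈ 𝓝[Set.Ioo α β] x, LipschitzOnWith K f s)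
    (hu₀ : u₀ ∈ Set.Ioo α β) :
    (∃ T : ℝ≥0∞, 0 < T ∧ ∃ u : ℝ → ℝ, IsSolUpTo γ f (Set.Ioo α β) u₀ u T) ∧
    (∀ (T₁ T₂ : ℝ≥0∞) (u₁ u₂ : ℝ → ℝ),
      IsSolUpTo γ f (Set.Ioo α β) u₀ u₁ T₁ → IsSolUpTo γ f (Set.Ioo α β) u₀ u₂ T₂ →
      ∀ t : ℝ, 0 ≤ t → ENNReal.ofReal t < min T₁ T₂ → u₁ t = u₂ t) ∧
    (∃ u : ℝ → ℝ, IsSolUpTo γ f (Set.Ioo α β) u₀ u (maxTime γ f (Set.Ioo α β) u₀) ∧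
      (maxTime γ f (Set.Ioo α β) u₀ = ⊤ ∨
        (maxTime γ f (Set.Ioo α β) u₀ < ⊤ ∧
          (Filter.liminf u (𝓝[<] (maxTime γ f (Set.Ioo α β) u₀).toReal) = α ∨
           Filter.limsup u (𝓝[<] (maxTime γ f (Set.Ioo α β) u₀).toReal) = β)))) := by
  have hf' : LocallyLipschitzOn (Ioo α β) f := hf
  obtain ⟨ε, hε, u, hu⟩ := exists_pos_isSolOn hγ.1 hγ.2.le hf' (Ioo_mem_nhds hu₀.1 hu₀.2)
  have hpos : 0 < maxTime γ f (Ioo α β) u₀ :=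
    (ENNReal.ofReal_pos.2 hε).trans_le (le_maxTime (hu.isSolUpTo hε.le))
  obtain ⟨v, hv⟩ := exists_isSolUpTo_maxTime hγ.1 hf' hpos
  refine ⟨⟨_, ENNReal.ofReal_pos.2 hε, u, hu.isSolUpTo hε.le⟩,
    fun T₁ T₂ u₁ u₂ h₁ h₂ t ht htT => ?_, v, hv, ?_⟩
  · exact (h₁.isSolOn (lt_min_iff.1 htT).1).eqOn hγ.1 hf' (h₂.isSolOn (lt_min_iff.1 htT).2)
      ⟨ht, le_rfl⟩
  · rcases eq_or_ne (maxTime γ f (Ioo α β) u₀) ⊤ with htop | htop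
    · exact .inl htop
    · exact .inr ⟨htop.lt_top,
        liminf_eq_or_limsup_eq_of_maxTime_lt_top hγ.1 hγ.2.le hf' hv hpos htop.lt_top⟩

/-- existence, uniqueness, and the dichotomy at the maximal time. -/
theorem stmt0 (γ α β u₀ : ℝ) (f : ℝ → ℝ)
    (hγ : γ ∈ Set.Ioo (0:ℝ) 1) (hαβ : α < β)
    (hf : ∀ x ∈ Set.Ioo α β, ∃ K : NNReal, ∃ s ∈ 𝓝[Set.Ioo α β] x, LipschitzOnWith K f s)
    (hu₀ : u₀ ∈ Set.Ioo α β) :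
    (∃ T : ℝ≥0∞, 0 < T ∧ ∃ u : ℝ → ℝ, IsSolUpTo γ f (Set.Ioo α β) u₀ u T) ∧
    (∀ (T₁ T₂ : ℝ≥0∞) (u₁ u₂ : ℝ → ℝ),
      IsSolUpTo γ f (Set.Ioo α β) u₀ u₁ T₁ → IsSolUpTo γ f (Set.Ioo α β) u₀ u₂ T₂ →
      ∀ t : ℝ, 0 ≤ t → ENNReal.ofReal t < min T₁ T₂ → u₁ t = u₂ t) ∧
    (∃ u : ℝ → ℝ, IsSolUpTo γ f (Set.Ioo α β) u₀ u (maxTime γ f (Set.Ioo α β) u₀) ∧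
      (maxTime γ f (Set.Ioo α β) u₀ = ⊤ ∨
        (maxTime γ f (Set.Ioo α β) u₀ < ⊤ ∧
          (Filter.liminf u (𝓝[<] (maxTime γ f (Set.Ioo α β) u₀).toReal) = α ∨
           Filter.limsup u (𝓝[<] (maxTime γ f (Set.Ioo α β) u₀).toReal) = β)))) :=
  stmt0_general γ α β u₀ f hγ hf hu₀
end

section
/- Let γ ∈ (0,1), let f be locally Lipschitz continuous, let u₀ be in the domain of f with f(u₀) ≠ 0, and let u be the unique solution of D_c^γ u = f(u), u(0) = u₀, on its maximal interval [0, T_b). Then f(u(t)) f(u₀) ≥ 0 for all t ∈ (0, T_b), and the set {t ∈ (0, T_b) : f(u(t)) = 0} is nowhere dense in (0, T_b). -/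
open MeasureTheory Real Filter Set Asymptotics
open scoped ENNReal Topology

section helpers
variable {γ : ℝ}

lemma ae_ne_restrict (X : Set ℝ) (b : ℝ) : ∀ᵐ s ∂((volume : Measure ℝ).restrict X), s ≠ b := by
  apply ae_restrict_of_ae
  rw [MeasureTheory.ae_iff]
  simpa using measure_singleton (α := ℝ) (μ := volume) b

lemma integral_nonneg_Ico {F : ℝ → ℝ} {a b : ℝ} (hab : a ≤ b)
    (h : ∀ s ∈ Set.Ico a b, 0 ≤ F s) : 0 ≤ ∫ s in a..b, F s := by
  apply intervalIntegral.integral_nonneg_of_ae_restrict hab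
  filter_upwards [ae_restrict_mem measurableSet_Icc, ae_ne_restrict (Icc a b) b] with s hs hne
  exact h s ⟨hs.1, lt_of_le_of_ne hs.2 hne⟩

lemma integral_mono_Ico {F G : ℝ → ℝ} {a b : ℝ} (hab : a ≤ b)
    (hF : IntervalIntegrable F volume a b) (hG : IntervalIntegrable G volume a b)
    (h : ∀ s ∈ Set.Ico a b, F s ≤ G s) : ∫ s in a..b, F s ≤ ∫ s in a..b, G s := by
  apply intervalIntegral.integral_mono_ae_restrict hab hF hG
  filter_upwards [ae_restrict_mem measurableSet_Icc, ae_ne_restrict (Icc a b) b] with s hs hne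
  exact h s ⟨hs.1, lt_of_le_of_ne hs.2 hne⟩

lemma ker_intable (hγ : γ ∈ Set.Ioo (0:ℝ) 1) (t a b : ℝ) :
    IntervalIntegrable (fun s => (t - s) ^ (γ - 1)) volume a b := by
  have h := (intervalIntegral.intervalIntegrable_rpow' (a := t - a) (b := t - b)
    (by linarith [hγ.1] : (-1:ℝ) < γ - 1)).comp_sub_left t
  simpa using h

lemma kerg_intable (hγ : γ ∈ Set.Ioo (0:ℝ) 1) {g : ℝ → ℝ} {a b : ℝ} (t : ℝ)
    (hg : ContinuousOn g (Set.uIcc a b)) :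
    IntervalIntegrable (fun s => (t - s) ^ (γ - 1) * g s) volume a b :=
  (ker_intable hγ t a b).mul_continuousOn hg

lemma ker_integral (hγ : γ ∈ Set.Ioo (0:ℝ) 1) {a b : ℝ} (hab : a ≤ b) :
    (∫ s in a..b, (b - s) ^ (γ - 1)) = (b - a) ^ γ / γ := by
  have h1 : (∫ s in a..b, (b - s) ^ (γ - 1)) = ∫ x in (b - b)..(b - a), x ^ (γ - 1) :=
    intervalIntegral.integral_comp_sub_left (fun x => x ^ (γ - 1)) b
  rw [h1, sub_self]
  rw [integral_rpow (Or.inl (by linarith [hγ.1]))]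
  rw [Real.zero_rpow (by linarith [hγ.1] : γ - 1 + 1 ≠ 0)]
  ring_nf

lemma integral_pos_split {F : ℝ → ℝ} {b δ : ℝ} (h0δ : 0 < δ) (hδb : δ ≤ b)
    (hi : IntervalIntegrable F volume 0 b)
    (hnn : ∀ s ∈ Set.Ico (0:ℝ) b, 0 ≤ F s)
    (hpos : ∀ s ∈ Set.Ioo (0:ℝ) δ, 0 < F s) :
    0 < ∫ s in (0:ℝ)..b, F s := by
  have h0b : (0:ℝ) ≤ b := h0δ.le.trans hδb
  have h1 : IntervalIntegrable F volume 0 δ := hi.mono_set (by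
    rw [Set.uIcc_of_le h0δ.le, Set.uIcc_of_le h0b]; exact Set.Icc_subset_Icc le_rfl hδb)
  have h2 : IntervalIntegrable F volume δ b := hi.mono_set (by
    rw [Set.uIcc_of_le hδb, Set.uIcc_of_le h0b]; exact Set.Icc_subset_Icc h0δ.le le_rfl)
  have hsplit := intervalIntegral.integral_add_adjacent_intervals h1 h2
  have p1 : 0 < ∫ s in (0:ℝ)..δ, F s :=
    intervalIntegral.intervalIntegral_pos_of_pos_on h1 hpos h0δ
  have p2 : 0 ≤ ∫ s in δ..b, F s :=
    integral_nonneg_Ico hδb (fun s hs => hnn s ⟨h0δ.le.trans hs.1, hs.2⟩)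
  linarith [hsplit]

lemma exists_front {g : ℝ → ℝ} {b : ℝ} (hb : 0 < b)
    (hgc : ContinuousOn g (Set.Icc 0 b)) (hg0 : 0 < g 0) :
    ∃ δ, 0 < δ ∧ δ ≤ b ∧ ∀ s ∈ Set.Icc (0:ℝ) δ, 0 < g s := by
  have h0 : (0:ℝ) ∈ Set.Icc (0:ℝ) b := ⟨le_rfl, hb.le⟩
  have hcw : ContinuousWithinAt g (Set.Icc 0 b) 0 := hgc 0 h0
  have hpre : g ⁻¹' (Set.Ioi 0) ∈ nhdsWithin (0:ℝ) (Set.Icc 0 b) :=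
    hcw (Ioi_mem_nhds hg0)
  obtain ⟨ε, hε, hsub⟩ := Metric.mem_nhdsWithin_iff.1 hpre
  refine ⟨min (ε/2) b, by positivity, min_le_right _ _, fun s hs => ?_⟩
  have hsball : s ∈ Metric.ball (0:ℝ) ε := by
    rw [Metric.mem_ball, Real.dist_eq, sub_zero, abs_of_nonneg hs.1]
    exact lt_of_le_of_lt (hs.2.trans (min_le_left _ _)) (by linarith)
  exact hsub ⟨hsball, ⟨hs.1, hs.2.trans (min_le_right _ _)⟩⟩

lemma integral_ker_pos {g w : ℝ → ℝ} {b : ℝ} (hb : 0 < b)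
    (hi : IntervalIntegrable (fun s => w s * g s) volume 0 b)
    (hwpos : ∀ s ∈ Set.Ico (0:ℝ) b, 0 < w s)
    (hgnn : ∀ s ∈ Set.Ico (0:ℝ) b, 0 ≤ g s)
    (hgc : ContinuousOn g (Set.Icc 0 b)) (hg0 : 0 < g 0) :
    0 < ∫ s in (0:ℝ)..b, w s * g s := by
  obtain ⟨δ, hδpos, hδb, hfront⟩ := exists_front hb hgc hg0
  have hδb' : min δ (b/2) ≤ b := le_trans (min_le_right _ _) (by linarith)
  apply integral_pos_split (δ := min δ (b/2)) (by positivity) hδb' hi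
  · exact fun s hs => mul_nonneg (hwpos s hs).le (hgnn s hs)
  · intro s hs
    have hsb : s ∈ Set.Ico (0:ℝ) b := ⟨hs.1.le, lt_of_lt_of_le hs.2 hδb'⟩
    exact mul_pos (hwpos s hsb) (hfront s ⟨hs.1.le, (hs.2.trans_le (min_le_left _ _)).le⟩)

end helpers


section core
variable {γ T α β : ℝ} {f u : ℝ → ℝ}

lemma lip_continuousOn
    (hf : ∀ x ∈ Set.Ioo α β, ∃ K : NNReal, ∃ s ∈ 𝓝[Set.Ioo α β] x, LipschitzOnWith K f s) :
    ContinuousOn f (Set.Ioo α β) := by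
  intro x hx
  obtain ⟨K, s, hs, hl⟩ := hf x hx
  have hmem : 𝓝[Set.Ioo α β] x = 𝓝 x := nhdsWithin_eq_nhds.2 (isOpen_Ioo.mem_nhds hx)
  rw [hmem] at hs
  exact (hl.continuousOn.continuousAt hs).continuousWithinAt

lemma sol_diff (hγ : γ ∈ Set.Ioo (0:ℝ) 1)
    (hgc : ContinuousOn (fun s => f (u s)) (Set.Icc 0 T))
    (heq : ∀ t ∈ Set.Icc (0:ℝ) T,
      u t = u 0 + (1 / Real.Gamma γ) * ∫ s in (0:ℝ)..t, (t - s) ^ (γ - 1) * f (u s))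
    {τ t : ℝ} (hτ : 0 ≤ τ) (hτt : τ ≤ t) (htT : t ≤ T) :
    u t - u τ = (1 / Real.Gamma γ) *
      ((∫ s in (0:ℝ)..τ, ((t - s) ^ (γ - 1) - (τ - s) ^ (γ - 1)) * f (u s)) +
       ∫ s in τ..t, (t - s) ^ (γ - 1) * f (u s)) := by
  have hc1 : ContinuousOn (fun s => f (u s)) (Set.uIcc 0 τ) := by
    apply hgc.mono; rw [Set.uIcc_of_le hτ]; exact Set.Icc_subset_Icc le_rfl (hτt.trans htT)
  have hc2 : ContinuousOn (fun s => f (u s)) (Set.uIcc τ t) := by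
    apply hgc.mono; rw [Set.uIcc_of_le hτt]; exact Set.Icc_subset_Icc hτ htT
  have i1 : IntervalIntegrable (fun s => (t - s) ^ (γ - 1) * f (u s)) volume 0 τ :=
    kerg_intable hγ t hc1
  have i2 : IntervalIntegrable (fun s => (t - s) ^ (γ - 1) * f (u s)) volume τ t :=
    kerg_intable hγ t hc2
  have i3 : IntervalIntegrable (fun s => (τ - s) ^ (γ - 1) * f (u s)) volume 0 τ :=
    kerg_intable hγ τ hc1
  have hsplit : (∫ s in (0:ℝ)..t, (t - s) ^ (γ - 1) * f (u s))
      = (∫ s in (0:ℝ)..τ, (t - s) ^ (γ - 1) * f (u s))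
        + ∫ s in τ..t, (t - s) ^ (γ - 1) * f (u s) :=
    (intervalIntegral.integral_add_adjacent_intervals i1 i2).symm
  have hsub : (∫ s in (0:ℝ)..τ, ((t - s) ^ (γ - 1) - (τ - s) ^ (γ - 1)) * f (u s))
      = (∫ s in (0:ℝ)..τ, (t - s) ^ (γ - 1) * f (u s))
        - ∫ s in (0:ℝ)..τ, (τ - s) ^ (γ - 1) * f (u s) := by
    rw [← intervalIntegral.integral_sub i1 i3]
    apply intervalIntegral.integral_congr
    intro s _; ring
  rw [heq t ⟨hτ.trans hτt, htT⟩, heq τ ⟨hτ, hτt.trans htT⟩, hsplit, hsub]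
  ring

end core


section core
variable {γ T α β : ℝ} {f u : ℝ → ℝ}

lemma core_sign (hγ : γ ∈ Set.Ioo (0:ℝ) 1)
    (hf : ∀ x ∈ Set.Ioo α β, ∃ K : NNReal, ∃ s ∈ 𝓝[Set.Ioo α β] x, LipschitzOnWith K f s)
    (hT : 0 < T)
    (huc : ContinuousOn u (Set.Icc 0 T))
    (hmem : ∀ t ∈ Set.Icc (0:ℝ) T, u t ∈ Set.Ioo α β)
    (heq : ∀ t ∈ Set.Icc (0:ℝ) T,
      u t = u 0 + (1 / Real.Gamma γ) * ∫ s in (0:ℝ)..t, (t - s) ^ (γ - 1) * f (u s))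
    (hpos : 0 < f (u 0)) :
    ∀ t ∈ Set.Icc (0:ℝ) T, 0 ≤ f (u t) := by
  have hgc : ContinuousOn (fun t => f (u t)) (Set.Icc 0 T) :=
    (lip_continuousOn hf).comp huc (fun t ht => hmem t ht)
  set c := 1 / Real.Gamma γ with hc_def
  have hcpos : 0 < c := by
    have := Real.Gamma_pos_of_pos hγ.1; positivity
  by_contra hcon
  push_neg at hcon
  obtain ⟨t₀', ht₀'mem, ht₀'neg⟩ := hcon
  set S : Set ℝ := {t | t ∈ Set.Icc (0:ℝ) T ∧ f (u t) < 0} with hS_def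
  have hSne : S.Nonempty := ⟨t₀', ht₀'mem, ht₀'neg⟩
  have hSbdd : BddBelow S := ⟨0, fun t ht => ht.1.1⟩
  set σ := sInf S with hσ_def
  have hσcl : σ ∈ closure S := csInf_mem_closure hSne hSbdd
  have hSsub : S ⊆ Set.Icc 0 T := fun t ht => ht.1
  have hσIcc : σ ∈ Set.Icc (0:ℝ) T := closure_minimal hSsub isClosed_Icc hσcl
  have hσle : f (u σ) ≤ 0 := by
    obtain ⟨x, hxS, hxlim⟩ := mem_closure_iff_seq_limit.1 hσcl
    have hxlim' : Tendsto x atTop (𝓝[Set.Icc 0 T] σ) :=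
      tendsto_nhdsWithin_iff.2 ⟨hxlim, Filter.Eventually.of_forall (fun n => (hxS n).1)⟩
    have htend : Tendsto (fun n => f (u (x n))) atTop (𝓝 (f (u σ))) :=
      (hgc σ hσIcc).tendsto.comp hxlim'
    exact le_of_tendsto htend (Filter.Eventually.of_forall fun n => (hxS n).2.le)
  have hlow : ∀ t ∈ Set.Icc (0:ℝ) T, t < σ → 0 ≤ f (u t) := by
    intro t ht htσ
    by_contra hneg
    push_neg at hneg
    exact absurd (csInf_le hSbdd ⟨ht, hneg⟩) (not_le.2 htσ)
  have hσpos : 0 < σ := by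
    rcases hσIcc.1.eq_or_lt with h | h
    · exfalso; rw [← h] at hσle; linarith
    · exact h
  have hglesigma : ∀ t ∈ Set.Icc (0:ℝ) σ, 0 ≤ f (u t) := by
    intro t ht
    rcases ht.2.eq_or_lt with h | h
    · rw [h]
      have hne : (𝓝[Set.Ico 0 σ] σ).NeBot := by
        rw [← mem_closure_iff_nhdsWithin_neBot, closure_Ico hσpos.ne]
        exact ⟨hσpos.le, le_rfl⟩
      have hmono : Set.Ico (0:ℝ) σ ⊆ Set.Icc 0 T :=
        fun s hs => ⟨hs.1, hs.2.le.trans hσIcc.2⟩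
      have ht2 : Tendsto (fun t => f (u t)) (𝓝[Set.Ico 0 σ] σ) (𝓝 (f (u σ))) :=
        (hgc σ hσIcc).mono hmono
      exact ge_of_tendsto ht2 (by
        filter_upwards [self_mem_nhdsWithin] with s hs
        exact hlow s (hmono hs) hs.2)
    · exact hlow t ⟨ht.1, h.le.trans hσIcc.2⟩ h
  have hgσ : f (u σ) = 0 := le_antisymm hσle (hglesigma σ ⟨hσpos.le, le_rfl⟩)
  have hσT : σ < T := by
    rcases hσIcc.2.eq_or_lt with h | h
    · exfalso
      obtain ⟨t₀, ht₀⟩ := hSne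
      have h1 : σ ≤ t₀ := csInf_le hSbdd ht₀
      have h2 : t₀ ≤ T := ht₀.1.2
      have h3 : t₀ = σ := le_antisymm (h ▸ h2) h1
      rw [h3] at ht₀; exact absurd hgσ (ne_of_lt ht₀.2)
    · exact h
  have hqmem : u σ ∈ Set.Ioo α β := hmem σ hσIcc
  have hgcσ : ContinuousOn (fun s => f (u s)) (Set.uIcc 0 σ) := by
    rw [Set.uIcc_of_le hσpos.le]; exact hgc.mono (Set.Icc_subset_Icc le_rfl hσIcc.2)
  have hq_gt : u 0 < u σ := by
    have hd := sol_diff hγ hgc heq le_rfl hσpos.le hσIcc.2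
    rw [intervalIntegral.integral_same] at hd
    have hint : 0 < ∫ s in (0:ℝ)..σ, (σ - s) ^ (γ - 1) * f (u s) := by
      apply integral_ker_pos hσpos (kerg_intable hγ σ hgcσ)
      · intro s hs; exact Real.rpow_pos_of_pos (by linarith [hs.2] : (0:ℝ) < σ - s) _
      · intro s hs; exact hglesigma s ⟨hs.1, hs.2.le⟩
      · exact hgc.mono (Set.Icc_subset_Icc le_rfl hσIcc.2)
      · exact hpos
    nlinarith [hd, hint, hcpos]
  have hfnn : ∀ v ∈ Set.Icc (u 0) (u σ), 0 ≤ f v := by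
    intro v hv
    obtain ⟨s, hs, rfl⟩ :=
      intermediate_value_Icc hσpos.le (huc.mono (Set.Icc_subset_Icc le_rfl hσIcc.2)) hv
    exact hglesigma s hs
  obtain ⟨K, sN, hsN, hlip⟩ := hf (u σ) hqmem
  have hsN' : sN ∈ 𝓝 (u σ) := by
    rwa [nhdsWithin_eq_nhds.2 (isOpen_Ioo.mem_nhds hqmem)] at hsN
  obtain ⟨r, hrpos, hball⟩ := Metric.mem_nhds_iff.1 hsN'
  have hqsN : u σ ∈ sN := hball (Metric.mem_ball_self hrpos)
  have hKnn : (0:ℝ) ≤ ↑K := K.coe_nonneg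
  have hKbound : ∀ y ∈ Metric.ball (u σ) r, |f y| ≤ ↑K * |y - u σ| := by
    intro y hy
    have hd := hlip.dist_le_mul y (hball hy) (u σ) hqsN
    rw [Real.dist_eq, Real.dist_eq, hgσ, sub_zero] at hd
    exact hd
  set ρ := min r ((u σ - u 0)/2) with hρ_def
  have hρpos : 0 < ρ := lt_min hrpos (by linarith)
  have hpre : u ⁻¹' (Metric.ball (u σ) ρ) ∈ 𝓝[Set.Icc 0 T] σ :=
    (huc σ hσIcc) (Metric.ball_mem_nhds (u σ) hρpos)
  obtain ⟨δ₂, hδ₂pos, hδ₂sub⟩ := Metric.mem_nhdsWithin_iff.1 hpre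
  set B := γ / (2 * (c * ↑K + 1)) with hB_def
  have hBpos : 0 < B := div_pos hγ.1 (by positivity)
  set δ₃ := B ^ (γ⁻¹ : ℝ) with hδ₃_def
  have hδ₃pos : 0 < δ₃ := Real.rpow_pos_of_pos hBpos _
  have hδ₃γ : δ₃ ^ γ = B := Real.rpow_inv_rpow hBpos.le (ne_of_gt hγ.1)
  have hhalf : c * ↑K * δ₃ ^ γ / γ ≤ 1/2 := by
    rw [hδ₃γ, hB_def]
    have hne1 : (2 * (c * ↑K + 1)) ≠ 0 := by positivity
    have hγne : γ ≠ 0 := ne_of_gt hγ.1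
    have heq2 : c * ↑K * (γ / (2 * (c * ↑K + 1))) / γ = c * ↑K / (2 * (c * ↑K + 1)) := by
      field_simp
    rw [heq2, div_le_div_iff₀ (by positivity) (by norm_num)]
    nlinarith [hcpos, hKnn]
  set δ := min (min (δ₂/2) δ₃) (T - σ) with hδ_def
  have hδpos : 0 < δ := lt_min (lt_min (by linarith) hδ₃pos) (by linarith)
  have hδT : σ + δ ≤ T := by
    have := min_le_right (min (δ₂/2) δ₃) (T - σ); linarith
  have hδδ₂ : δ < δ₂ := lt_of_le_of_lt ((min_le_left _ _).trans (min_le_left _ _)) (by linarith)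
  have hδδ₃ : δ ≤ δ₃ := (min_le_left _ _).trans (min_le_right _ _)
  have hballmem : ∀ s ∈ Set.Icc σ (σ + δ), u s ∈ Metric.ball (u σ) ρ := by
    intro s hs
    apply hδ₂sub
    refine ⟨?_, ⟨hσpos.le.trans hs.1, hs.2.trans hδT⟩⟩
    rw [Metric.mem_ball, Real.dist_eq, abs_of_nonneg (by linarith [hs.1])]
    linarith [hs.2]
  have hδhalf : c * ↑K * δ ^ γ / γ ≤ 1/2 := by
    have h1 : δ ^ γ ≤ δ₃ ^ γ := Real.rpow_le_rpow hδpos.le hδδ₃ hγ.1.le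
    have h2 : c * ↑K * δ ^ γ / γ ≤ c * ↑K * δ₃ ^ γ / γ :=
      (div_le_div_iff_of_pos_right hγ.1).2 (mul_le_mul_of_nonneg_left h1 (mul_nonneg hcpos.le hKnn))
    linarith
  have hIccT : Set.Icc σ (σ + δ) ⊆ Set.Icc 0 T :=
    fun s hs => ⟨hσpos.le.trans hs.1, hs.2.trans hδT⟩
  have hclaim : ∀ t ∈ Set.Ioc σ (σ + δ), 0 ≤ f (u t) := by
    intro t ht
    have hker : ∀ t' : ℝ, σ ≤ t' → IntervalIntegrable
        (fun s => ((σ - s) ^ (γ - 1) - (t' - s) ^ (γ - 1)) * f (u s)) volume 0 σ := by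
      intro t' ht'
      have heq3 : (fun s => ((σ - s) ^ (γ - 1) - (t' - s) ^ (γ - 1)) * f (u s))
          = fun s => (σ - s) ^ (γ - 1) * f (u s) - (t' - s) ^ (γ - 1) * f (u s) := by
        funext s; ring
      rw [heq3]
      exact (kerg_intable hγ σ hgcσ).sub (kerg_intable hγ t' hgcσ)
    set A : ℝ → ℝ :=
      fun t' => ∫ s in (0:ℝ)..σ, ((σ - s) ^ (γ - 1) - (t' - s) ^ (γ - 1)) * f (u s) with hA_def
    have hAnn : ∀ t', σ ≤ t' → 0 ≤ A t' := by
      intro t' ht'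
      apply integral_nonneg_Ico hσpos.le
      intro s hs
      apply mul_nonneg _ (hglesigma s ⟨hs.1, hs.2.le⟩)
      have h1 : (0:ℝ) < σ - s := by linarith [hs.2]
      have h2 := Real.rpow_le_rpow_of_nonpos h1 (by linarith : σ - s ≤ t' - s)
        (by linarith [hγ.2] : γ - 1 ≤ 0)
      linarith
    have hAmono : ∀ t', σ ≤ t' → t' ≤ t → A t' ≤ A t := by
      intro t' h1 h2
      apply integral_mono_Ico hσpos.le (hker t' h1) (hker t (h1.trans h2))
      intro s hs
      have hs1 : (0:ℝ) < t' - s := by linarith [hs.2]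
      have h3 := Real.rpow_le_rpow_of_nonpos hs1 (by linarith : t' - s ≤ t - s)
        (by linarith [hγ.2] : γ - 1 ≤ 0)
      have hg := hglesigma s ⟨hs.1, hs.2.le⟩
      nlinarith
    have hform : ∀ t' ∈ Set.Icc σ t, u t' - u σ
        = c * (-(A t') + ∫ s in σ..t', (t' - s) ^ (γ - 1) * f (u s)) := by
      intro t' ht'
      have hd := sol_diff hγ hgc heq hσpos.le ht'.1 (ht'.2.trans (le_trans ht.2 hδT))
      have hneg : (∫ s in (0:ℝ)..σ, ((t' - s) ^ (γ - 1) - (σ - s) ^ (γ - 1)) * f (u s))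
          = -(A t') := by
        rw [hA_def, ← intervalIntegral.integral_neg]
        apply intervalIntegral.integral_congr
        intro s _
        ring
      rw [hneg] at hd
      exact hd
    have hRbound : ∀ t' ∈ Set.Icc σ t, ∀ Mb : ℝ,
        (∀ s ∈ Set.Icc σ t', |f (u s)| ≤ Mb) →
        |∫ s in σ..t', (t' - s) ^ (γ - 1) * f (u s)| ≤ Mb * ((t' - σ) ^ γ / γ) := by
      intro t' ht' Mb hbound
      have hσt' : σ ≤ t' := ht'.1
      have hgct' : ContinuousOn (fun s => f (u s)) (Set.uIcc σ t') := by
        rw [Set.uIcc_of_le hσt']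
        exact hgc.mono (fun s hs =>
          ⟨hσpos.le.trans hs.1, hs.2.trans (ht'.2.trans (ht.2.trans hδT))⟩)
      have hi1 : IntervalIntegrable (fun s => (t' - s) ^ (γ - 1) * f (u s)) volume σ t' :=
        kerg_intable hγ t' hgct'
      have habs := intervalIntegral.abs_integral_le_integral_abs
        (f := fun s => (t' - s) ^ (γ - 1) * f (u s)) (μ := volume) hσt'
      have hmono2 : (∫ s in σ..t', |(t' - s) ^ (γ - 1) * f (u s)|)
          ≤ ∫ s in σ..t', (t' - s) ^ (γ - 1) * Mb := by
        apply integral_mono_Ico hσt' hi1.abs ((ker_intable hγ t' σ t').mul_const Mb)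
        intro s hs
        rw [abs_mul]
        have hknn : (0:ℝ) ≤ (t' - s) ^ (γ - 1) := Real.rpow_nonneg (by linarith [hs.2]) _
        rw [abs_of_nonneg hknn]
        exact mul_le_mul_of_nonneg_left (hbound s ⟨hs.1, hs.2.le⟩) hknn
      have hval : (∫ s in σ..t', (t' - s) ^ (γ - 1) * Mb) = ((t' - σ) ^ γ / γ) * Mb := by
        rw [intervalIntegral.integral_mul_const, ker_integral hγ hσt']
      calc |∫ s in σ..t', (t' - s) ^ (γ - 1) * f (u s)|
          ≤ ∫ s in σ..t', |(t' - s) ^ (γ - 1) * f (u s)| := habs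
        _ ≤ ∫ s in σ..t', (t' - s) ^ (γ - 1) * Mb := hmono2
        _ = Mb * ((t' - σ) ^ γ / γ) := by rw [hval]; ring
    obtain ⟨t', ht'mem, ht'max⟩ := isCompact_Icc.exists_isMaxOn
      (Set.nonempty_Icc.2 ht.1.le)
      (((huc.mono (fun s hs => hIccT ⟨hs.1, hs.2.trans ht.2⟩)).sub continuousOn_const).abs
        : ContinuousOn (fun s => |u s - u σ|) (Set.Icc σ t))
    set M := |u t' - u σ| with hM_def
    have hMnn : 0 ≤ M := abs_nonneg _
    have hMmax : ∀ s ∈ Set.Icc σ t, |u s - u σ| ≤ M := fun s hs => (isMaxOn_iff.1 ht'max) s hs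
    have hfb : ∀ s ∈ Set.Icc σ t, |f (u s)| ≤ ↑K * M := by
      intro s hs
      have hsmem : u s ∈ Metric.ball (u σ) ρ := hballmem s ⟨hs.1, hs.2.trans ht.2⟩
      have hsr : u s ∈ Metric.ball (u σ) r := by
        rw [Metric.mem_ball] at hsmem ⊢
        exact lt_of_lt_of_le hsmem (min_le_left _ _)
      calc |f (u s)| ≤ ↑K * |u s - u σ| := hKbound _ hsr
        _ ≤ ↑K * M := mul_le_mul_of_nonneg_left (hMmax s hs) hKnn
    have ht'Icc : t' ∈ Set.Icc σ t := ht'mem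
    have hrp1 : ∀ t'' ∈ Set.Icc σ t, c * ↑K * (t'' - σ) ^ γ / γ ≤ 1/2 := by
      intro t'' ht''
      have h3 : (t'' - σ) ^ γ ≤ δ ^ γ := Real.rpow_le_rpow (by linarith [ht''.1])
        (by linarith [ht''.2, ht.2]) hγ.1.le
      have h4 : c * ↑K * (t'' - σ) ^ γ / γ ≤ c * ↑K * δ ^ γ / γ :=
        (div_le_div_iff_of_pos_right hγ.1).2 (mul_le_mul_of_nonneg_left h3 (mul_nonneg hcpos.le hKnn))
      linarith
    have hduM : M ≤ 2 * (c * A t) := by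
      have h1 := hform t' ht'Icc
      have h2 := hRbound t' ht'Icc (↑K * M) (fun s hs => hfb s ⟨hs.1, hs.2.trans ht'Icc.2⟩)
      set R' := ∫ s in σ..t', (t' - s) ^ (γ - 1) * f (u s) with hR'_def
      have habs2 : M ≤ c * (A t' + |R'|) := by
        rw [hM_def, h1, abs_mul, abs_of_pos hcpos]
        have h5 : |(-(A t') + R')| ≤ A t' + |R'| := by
          have h6 := abs_add_le (-(A t')) R'
          rwa [abs_neg, abs_of_nonneg (hAnn t' ht'Icc.1)] at h6
        exact mul_le_mul_of_nonneg_left h5 hcpos.le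
      have h7 : c * |R'| ≤ (c * ↑K * (t' - σ) ^ γ / γ) * M := by
        calc c * |R'| ≤ c * (↑K * M * ((t' - σ) ^ γ / γ)) :=
              mul_le_mul_of_nonneg_left h2 hcpos.le
          _ = (c * ↑K * (t' - σ) ^ γ / γ) * M := by ring
      have h8 : (c * ↑K * (t' - σ) ^ γ / γ) * M ≤ (1/2) * M :=
        mul_le_mul_of_nonneg_right (hrp1 t' ht'Icc) hMnn
      have h9 : A t' ≤ A t := hAmono t' ht'Icc.1 ht'Icc.2
      have h10 : c * A t' ≤ c * A t := mul_le_mul_of_nonneg_left h9 hcpos.le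
      have h12 : c * (A t' + |R'|) = c * A t' + c * |R'| := by ring
      linarith
    have hformt := hform t ⟨ht.1.le, le_rfl⟩
    set Rt := ∫ s in σ..t, (t - s) ^ (γ - 1) * f (u s) with hRt_def
    have hRtb := hRbound t ⟨ht.1.le, le_rfl⟩ (↑K * M) hfb
    have h11 : c * Rt ≤ c * A t := by
      have hca : c * |Rt| ≤ (c * ↑K * (t - σ) ^ γ / γ) * M := by
        calc c * |Rt| ≤ c * (↑K * M * ((t - σ) ^ γ / γ)) :=
              mul_le_mul_of_nonneg_left hRtb hcpos.le
          _ = (c * ↑K * (t - σ) ^ γ / γ) * M := by ring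
      have hcb := hrp1 t ⟨ht.1.le, le_rfl⟩
      have hd1 : c * Rt ≤ c * |Rt| := mul_le_mul_of_nonneg_left (le_abs_self Rt) hcpos.le
      have hd2 : (c * ↑K * (t - σ) ^ γ / γ) * M ≤ (1/2) * M :=
        mul_le_mul_of_nonneg_right hcb hMnn
      linarith
    have hut : u t ≤ u σ := by
      have hr : c * (-(A t) + Rt) = c * Rt - c * A t := by ring
      linarith [hformt, hr, h11]
    have hutlow : u 0 < u t := by
      have hb2 := hballmem t ⟨ht.1.le, ht.2⟩
      rw [Metric.mem_ball, Real.dist_eq] at hb2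
      have hρ2 : ρ ≤ (u σ - u 0)/2 := min_le_right _ _
      have habs3 := abs_lt.1 hb2
      linarith [habs3.1]
    exact hfnn (u t) ⟨hutlow.le, hut⟩
  have hlb : ∀ t₀ ∈ S, σ + δ ≤ t₀ := by
    intro t₀ ht₀
    by_contra hlt
    push_neg at hlt
    rcases le_or_gt t₀ σ with h | h
    · exact absurd (hglesigma t₀ ⟨ht₀.1.1, h⟩) (not_le.2 ht₀.2)
    · exact absurd (hclaim t₀ ⟨h, hlt.le⟩) (not_le.2 ht₀.2)
  have hfin := le_csInf hSne hlb
  rw [← hσ_def] at hfin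
  linarith

end core


section core2
variable {γ T α β : ℝ} {f u : ℝ → ℝ}

lemma core_nowhere (hγ : γ ∈ Set.Ioo (0:ℝ) 1)
    (hf : ∀ x ∈ Set.Ioo α β, ∃ K : NNReal, ∃ s ∈ 𝓝[Set.Ioo α β] x, LipschitzOnWith K f s)
    (hT : 0 < T)
    (huc : ContinuousOn u (Set.Icc 0 T))
    (hmem : ∀ t ∈ Set.Icc (0:ℝ) T, u t ∈ Set.Ioo α β)
    (heq : ∀ t ∈ Set.Icc (0:ℝ) T,
      u t = u 0 + (1 / Real.Gamma γ) * ∫ s in (0:ℝ)..t, (t - s) ^ (γ - 1) * f (u s))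
    (hpos : 0 < f (u 0))
    {t₁ t₂ : ℝ} (h1 : 0 < t₁) (h12 : t₁ < t₂) (h2T : t₂ ≤ T)
    (hz : ∀ t ∈ Set.Icc t₁ t₂, f (u t) = 0) : False := by
  have hgc : ContinuousOn (fun t => f (u t)) (Set.Icc 0 T) :=
    (lip_continuousOn hf).comp huc (fun t ht => hmem t ht)
  have hgnn : ∀ t ∈ Set.Icc (0:ℝ) T, 0 ≤ f (u t) := core_sign hγ hf hT huc hmem heq hpos
  set c := 1 / Real.Gamma γ with hc_def
  have hcpos : 0 < c := by
    have := Real.Gamma_pos_of_pos hγ.1; positivity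
  have h1T : t₁ ≤ T := h12.le.trans h2T
  -- strict decrease on intervals where f ∘ u vanishes
  have hdec : ∀ τ τ' : ℝ, 0 < τ → τ < τ' → τ' ≤ T →
      (∀ s ∈ Set.Icc τ τ', f (u s) = 0) → u τ' < u τ := by
    intro τ τ' hτ hττ' hτ'T hzz
    have hd := sol_diff hγ hgc heq hτ.le hττ'.le hτ'T
    have hR0 : (∫ s in τ..τ', (τ' - s) ^ (γ - 1) * f (u s)) = 0 := by
      have heqon : Set.EqOn (fun s => (τ' - s) ^ (γ - 1) * f (u s)) (fun _ => (0:ℝ))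
          (Set.uIcc τ τ') := by
        intro s hs
        rw [Set.uIcc_of_le hττ'.le] at hs
        simp [hzz s hs]
      rw [intervalIntegral.integral_congr heqon, intervalIntegral.integral_zero]
    have hgcτ : ContinuousOn (fun s => f (u s)) (Set.uIcc 0 τ) := by
      rw [Set.uIcc_of_le hτ.le]
      exact hgc.mono (Set.Icc_subset_Icc le_rfl (hττ'.le.trans hτ'T))
    have hker : IntervalIntegrable
        (fun s => ((τ - s) ^ (γ - 1) - (τ' - s) ^ (γ - 1)) * f (u s)) volume 0 τ := by
      have heq3 : (fun s => ((τ - s) ^ (γ - 1) - (τ' - s) ^ (γ - 1)) * f (u s))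
          = fun s => (τ - s) ^ (γ - 1) * f (u s) - (τ' - s) ^ (γ - 1) * f (u s) := by
        funext s; ring
      rw [heq3]
      exact (kerg_intable hγ τ hgcτ).sub (kerg_intable hγ τ' hgcτ)
    have hApos : 0 < ∫ s in (0:ℝ)..τ, ((τ - s) ^ (γ - 1) - (τ' - s) ^ (γ - 1)) * f (u s) := by
      apply integral_ker_pos hτ hker
      · intro s hs
        have hx : (0:ℝ) < τ - s := by linarith [hs.2]
        have h5 := Real.rpow_lt_rpow_of_neg hx (by linarith : τ - s < τ' - s)
          (by linarith [hγ.2] : γ - 1 < 0)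
        linarith
      · intro s hs; exact hgnn s ⟨hs.1, hs.2.le.trans (hττ'.le.trans hτ'T)⟩
      · exact hgc.mono (Set.Icc_subset_Icc le_rfl (hττ'.le.trans hτ'T))
      · exact hpos
    have hneg : (∫ s in (0:ℝ)..τ, ((τ' - s) ^ (γ - 1) - (τ - s) ^ (γ - 1)) * f (u s))
        = -(∫ s in (0:ℝ)..τ, ((τ - s) ^ (γ - 1) - (τ' - s) ^ (γ - 1)) * f (u s)) := by
      rw [← intervalIntegral.integral_neg]
      apply intervalIntegral.integral_congr
      intro s _
      ring
    rw [hR0, hneg] at hd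
    have hr : c * (-(∫ s in (0:ℝ)..τ, ((τ - s) ^ (γ - 1) - (τ' - s) ^ (γ - 1)) * f (u s)) + 0)
        = -(c * ∫ s in (0:ℝ)..τ, ((τ - s) ^ (γ - 1) - (τ' - s) ^ (γ - 1)) * f (u s)) := by
      ring
    rw [hr] at hd
    have := mul_pos hcpos hApos
    linarith
  have hpq : u t₂ < u t₁ := hdec t₁ t₂ h1 h12 h2T hz
  have hfz : ∀ v ∈ Set.Icc (u t₂) (u t₁), f v = 0 := by
    intro v hv
    obtain ⟨s, hs, rfl⟩ := intermediate_value_Icc' h12.le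
      (huc.mono (Set.Icc_subset_Icc h1.le h2T)) hv
    exact hz s hs
  have h0t₂ : (0:ℝ) ≤ t₂ := (h1.trans h12).le
  have hp0 : u 0 < u t₂ := by
    have hd := sol_diff hγ hgc heq le_rfl h0t₂ h2T
    rw [intervalIntegral.integral_same] at hd
    have hgct₂ : ContinuousOn (fun s => f (u s)) (Set.uIcc 0 t₁) := by
      rw [Set.uIcc_of_le h1.le]
      exact hgc.mono (Set.Icc_subset_Icc le_rfl h1T)
    have hgct₂' : ContinuousOn (fun s => f (u s)) (Set.uIcc t₁ t₂) := by
      rw [Set.uIcc_of_le h12.le]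
      exact hgc.mono (Set.Icc_subset_Icc h1.le h2T)
    have i1 : IntervalIntegrable (fun s => (t₂ - s) ^ (γ - 1) * f (u s)) volume 0 t₁ :=
      kerg_intable hγ t₂ hgct₂
    have i2 : IntervalIntegrable (fun s => (t₂ - s) ^ (γ - 1) * f (u s)) volume t₁ t₂ :=
      kerg_intable hγ t₂ hgct₂'
    have hsplit := (intervalIntegral.integral_add_adjacent_intervals i1 i2).symm
    have hzero2 : (∫ s in t₁..t₂, (t₂ - s) ^ (γ - 1) * f (u s)) = 0 := by
      have heqon : Set.EqOn (fun s => (t₂ - s) ^ (γ - 1) * f (u s)) (fun _ => (0:ℝ))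
          (Set.uIcc t₁ t₂) := by
        intro s hs
        rw [Set.uIcc_of_le h12.le] at hs
        simp [hz s hs]
      rw [intervalIntegral.integral_congr heqon, intervalIntegral.integral_zero]
    rw [hsplit, hzero2] at hd
    have hpos2 : 0 < ∫ s in (0:ℝ)..t₁, (t₂ - s) ^ (γ - 1) * f (u s) := by
      apply integral_ker_pos h1 i1
      · intro s hs
        exact Real.rpow_pos_of_pos (by linarith [hs.2, h12] : (0:ℝ) < t₂ - s) _
      · intro s hs; exact hgnn s ⟨hs.1, hs.2.le.trans h1T⟩
      · exact hgc.mono (Set.Icc_subset_Icc le_rfl h1T)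
      · exact hpos
    have hr : c * (0 + ((∫ s in (0:ℝ)..t₁, (t₂ - s) ^ (γ - 1) * f (u s)) + 0))
        = c * ∫ s in (0:ℝ)..t₁, (t₂ - s) ^ (γ - 1) * f (u s) := by ring
    rw [hr] at hd
    have := mul_pos hcpos hpos2
    linarith
  -- first time u reaches u t₁
  have hC2closed : IsClosed (Set.Icc 0 t₁ ∩ u ⁻¹' {u t₁}) :=
    (huc.mono (Set.Icc_subset_Icc le_rfl h1T)).preimage_isClosed_of_isClosed
      isClosed_Icc isClosed_singleton
  have hC2ne : (Set.Icc 0 t₁ ∩ u ⁻¹' {u t₁}).Nonempty := ⟨t₁, ⟨h1.le, le_rfl⟩, rfl⟩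
  have hC2bdd : BddBelow (Set.Icc 0 t₁ ∩ u ⁻¹' {u t₁}) := ⟨0, fun s hs => hs.1.1⟩
  set τ₂ := sInf (Set.Icc 0 t₁ ∩ u ⁻¹' {u t₁}) with hτ₂_def
  have hτ₂mem := hC2closed.csInf_mem hC2ne hC2bdd
  have hτ₂q : u τ₂ = u t₁ := hτ₂mem.2
  have hτ₂Icc : τ₂ ∈ Set.Icc 0 t₁ := hτ₂mem.1
  have hτ₂pos : 0 < τ₂ := by
    rcases hτ₂Icc.1.eq_or_lt with h | h
    · exfalso; rw [← h] at hτ₂q; linarith [hp0, hpq, hτ₂q.symm.le, hτ₂q.ge]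
    · exact h
  have hτ₂T : τ₂ ≤ T := hτ₂Icc.2.trans h1T
  have hlt : ∀ s ∈ Set.Ico (0:ℝ) τ₂, u s < u t₁ := by
    intro s hs
    by_contra hge
    push_neg at hge
    have hq_in : u t₁ ∈ Set.Icc (u 0) (u s) := ⟨by linarith [hp0, hpq], hge⟩
    obtain ⟨s', hs', hus'⟩ := intermediate_value_Icc hs.1
      (huc.mono (Set.Icc_subset_Icc le_rfl ((hs.2.le.trans hτ₂Icc.2).trans h1T))) hq_in
    have hs'C2 : s' ∈ Set.Icc 0 t₁ ∩ u ⁻¹' {u t₁} :=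
      ⟨⟨hs'.1, hs'.2.trans (hs.2.le.trans hτ₂Icc.2)⟩, hus'⟩
    have := csInf_le hC2bdd hs'C2
    rw [← hτ₂_def] at this
    linarith [hs'.2, hs.2]
  -- last time u equals u t₂ before τ₂
  have hC1closed : IsClosed (Set.Icc 0 τ₂ ∩ u ⁻¹' {u t₂}) :=
    (huc.mono (Set.Icc_subset_Icc le_rfl hτ₂T)).preimage_isClosed_of_isClosed
      isClosed_Icc isClosed_singleton
  have hC1ne : (Set.Icc 0 τ₂ ∩ u ⁻¹' {u t₂}).Nonempty := by
    have hp_in : u t₂ ∈ Set.Icc (u 0) (u τ₂) := ⟨hp0.le, by rw [hτ₂q]; exact hpq.le⟩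
    obtain ⟨s, hs, hus⟩ := intermediate_value_Icc hτ₂pos.le
      (huc.mono (Set.Icc_subset_Icc le_rfl hτ₂T)) hp_in
    exact ⟨s, hs, hus⟩
  have hC1bdd : BddAbove (Set.Icc 0 τ₂ ∩ u ⁻¹' {u t₂}) := ⟨τ₂, fun s hs => hs.1.2⟩
  set τ₁ := sSup (Set.Icc 0 τ₂ ∩ u ⁻¹' {u t₂}) with hτ₁_def
  have hτ₁mem := hC1closed.csSup_mem hC1ne hC1bdd
  have hτ₁p : u τ₁ = u t₂ := hτ₁mem.2
  have hτ₁Icc : τ₁ ∈ Set.Icc 0 τ₂ := hτ₁mem.1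
  have hτ₁τ₂ : τ₁ < τ₂ := by
    rcases hτ₁Icc.2.eq_or_lt with h | h
    · exfalso; rw [h, hτ₂q] at hτ₁p; linarith
    · exact h
  have hτ₁pos : 0 < τ₁ := by
    rcases hτ₁Icc.1.eq_or_lt with h | h
    · exfalso; rw [← h] at hτ₁p; linarith
    · exact h
  have hmid : ∀ s ∈ Set.Icc τ₁ τ₂, f (u s) = 0 := by
    intro s hs
    rcases hs.1.eq_or_lt with h | hgt
    · rw [← h, hτ₁p]; exact hfz (u t₂) ⟨le_rfl, hpq.le⟩
    · have hsle : u s ≤ u t₁ := by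
        rcases hs.2.eq_or_lt with h2 | h2
        · rw [h2, hτ₂q]
        · exact (hlt s ⟨hτ₁pos.le.trans hs.1, h2⟩).le
      have hsge : u t₂ ≤ u s := by
        by_contra hlt2
        push_neg at hlt2
        have hp_in : u t₂ ∈ Set.Icc (u s) (u τ₂) := ⟨hlt2.le, by rw [hτ₂q]; exact hpq.le⟩
        obtain ⟨s', hs', hus'⟩ := intermediate_value_Icc hs.2
          (huc.mono (Set.Icc_subset_Icc (hτ₁pos.le.trans hs.1) hτ₂T)) hp_in
        have hs'C1 : s' ∈ Set.Icc 0 τ₂ ∩ u ⁻¹' {u t₂} :=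
          ⟨⟨(hτ₁pos.le.trans hs.1).trans hs'.1, hs'.2⟩, hus'⟩
        have hle := le_csSup hC1bdd hs'C1
        rw [← hτ₁_def] at hle
        linarith [hs'.1]
      exact hfz (u s) ⟨hsge, hsle⟩
  have hcontra := hdec τ₁ τ₂ hτ₁pos hτ₁τ₂ hτ₂T hmid
  rw [hτ₁p, hτ₂q] at hcontra
  linarith

end core2


section wrap
variable {γ T α β : ℝ} {f u : ℝ → ℝ}

lemma core_all (hγ : γ ∈ Set.Ioo (0:ℝ) 1)
    (hf : ∀ x ∈ Set.Ioo α β, ∃ K : NNReal, ∃ s ∈ 𝓝[Set.Ioo α β] x, LipschitzOnWith K f s)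
    (hT : 0 < T)
    (huc : ContinuousOn u (Set.Icc 0 T))
    (hmem : ∀ t ∈ Set.Icc (0:ℝ) T, u t ∈ Set.Ioo α β)
    (heq : ∀ t ∈ Set.Icc (0:ℝ) T,
      u t = u 0 + (1 / Real.Gamma γ) * ∫ s in (0:ℝ)..t, (t - s) ^ (γ - 1) * f (u s))
    (hne : f (u 0) ≠ 0) :
    (∀ t ∈ Set.Icc (0:ℝ) T, 0 ≤ f (u t) * f (u 0)) ∧
    (∀ t₁ t₂ : ℝ, 0 < t₁ → t₁ < t₂ → t₂ ≤ T →
      ¬ (∀ t ∈ Set.Icc t₁ t₂, f (u t) = 0)) := by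
  rcases hne.lt_or_gt with hneg | hpos
  · set F : ℝ → ℝ := fun x => -f (-x) with hF_def
    set U : ℝ → ℝ := fun t => -u t with hU_def
    have hF : ∀ x ∈ Set.Ioo (-β) (-α), ∃ K : NNReal, ∃ s ∈ 𝓝[Set.Ioo (-β) (-α)] x,
        LipschitzOnWith K F s := by
      intro x hx
      have hxm : -x ∈ Set.Ioo α β := ⟨by linarith [hx.2], by linarith [hx.1]⟩
      obtain ⟨K, sN, hsN, hlip⟩ := hf (-x) hxm
      have hsN' : sN ∈ 𝓝 (-x) := by
        rwa [nhdsWithin_eq_nhds.2 (isOpen_Ioo.mem_nhds hxm)] at hsN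
      refine ⟨K, (fun y : ℝ => -y) ⁻¹' sN, ?_, ?_⟩
      · apply mem_nhdsWithin_of_mem_nhds
        exact (continuous_neg.continuousAt).preimage_mem_nhds (by simpa using hsN')
      · intro a ha b hb
        have h1 := hlip (Set.mem_preimage.1 ha) (Set.mem_preimage.1 hb)
        simpa [F, edist_neg_neg] using h1
    have hUc : ContinuousOn U (Set.Icc 0 T) := huc.neg
    have hUmem : ∀ t ∈ Set.Icc (0:ℝ) T, U t ∈ Set.Ioo (-β) (-α) := by
      intro t ht
      have h2 := hmem t ht
      exact ⟨neg_lt_neg h2.2, neg_lt_neg h2.1⟩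
    have hUeq : ∀ t ∈ Set.Icc (0:ℝ) T,
        U t = U 0 + (1 / Real.Gamma γ) * ∫ s in (0:ℝ)..t, (t - s) ^ (γ - 1) * F (U s) := by
      intro t ht
      have hint : (∫ s in (0:ℝ)..t, (t - s) ^ (γ - 1) * F (U s))
          = -∫ s in (0:ℝ)..t, (t - s) ^ (γ - 1) * f (u s) := by
        rw [← intervalIntegral.integral_neg]
        apply intervalIntegral.integral_congr
        intro s _
        simp [F, U]
      show -u t = -u 0 + (1 / Real.Gamma γ) * _
      rw [hint, heq t ht]
      ring
    have hFpos : 0 < F (U 0) := by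
      simp only [F, U, neg_neg, neg_pos]
      exact hneg
    have hsign := core_sign hγ hF hT hUc hUmem hUeq hFpos
    constructor
    · intro t ht
      have h2 := hsign t ht
      have h3 : F (U t) = -f (u t) := by simp [F, U]
      rw [h3] at h2
      have h4 : f (u t) ≤ 0 := by linarith
      nlinarith [mul_nonneg (neg_nonneg.2 h4) (neg_nonneg.2 hneg.le)]
    · intro t₁ t₂ ha hb hc hzz
      apply core_nowhere hγ hF hT hUc hUmem hUeq hFpos ha hb hc
      intro t ht
      simp [F, U, hzz t ht]
  · have hsign := core_sign hγ hf hT huc hmem heq hpos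
    exact ⟨fun t ht => mul_nonneg (hsign t ht) hpos.le,
      fun t₁ t₂ ha hb hc hzz => core_nowhere hγ hf hT huc hmem heq hpos ha hb hc hzz⟩

end wrap


/-- `f(u(t)) f(u₀) ≥ 0` and the zero set of `f ∘ u` is nowhere dense. -/
theorem stmt2 (γ α β u₀ : ℝ) (f : ℝ → ℝ) (u : ℝ → ℝ)
    (hγ : γ ∈ Set.Ioo (0:ℝ) 1) (hαβ : α < β)
    (hf : ∀ x ∈ Set.Ioo α β, ∃ K : NNReal, ∃ s ∈ 𝓝[Set.Ioo α β] x, LipschitzOnWith K f s)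
    (hu₀ : u₀ ∈ Set.Ioo α β) (hfu₀ : f u₀ ≠ 0)
    (hu : IsSolUpTo γ f (Set.Ioo α β) u₀ u (maxTime γ f (Set.Ioo α β) u₀)) :
    (∀ t : ℝ, 0 < t → ENNReal.ofReal t < maxTime γ f (Set.Ioo α β) u₀ →
      0 ≤ f (u t) * f u₀) ∧
    IsNowhereDense
      {t : ℝ | 0 < t ∧ ENNReal.ofReal t < maxTime γ f (Set.Ioo α β) u₀ ∧ f (u t) = 0} := by
  obtain ⟨hu0, hcont, hmemS, heqS⟩ := hu
  set Tb := maxTime γ f (Set.Ioo α β) u₀ with hTb_def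
  have hS : ∀ {T : ℝ}, 0 < T → ENNReal.ofReal T < Tb →
      (∀ t ∈ Set.Icc (0:ℝ) T, 0 ≤ f (u t) * f (u 0)) ∧
      (∀ t₁ t₂ : ℝ, 0 < t₁ → t₁ < t₂ → t₂ ≤ T →
        ¬ (∀ t ∈ Set.Icc t₁ t₂, f (u t) = 0)) := by
    intro T hT hTb
    have hsub : ∀ s ∈ Set.Icc (0:ℝ) T, 0 ≤ s ∧ ENNReal.ofReal s < Tb := by
      intro s hs
      exact ⟨hs.1, lt_of_le_of_lt (ENNReal.ofReal_le_ofReal hs.2) hTb⟩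
    have huc : ContinuousOn u (Set.Icc 0 T) := hcont.mono (fun s hs => hsub s hs)
    have hmem' : ∀ t ∈ Set.Icc (0:ℝ) T, u t ∈ Set.Ioo α β :=
      fun t ht => hmemS t (hsub t ht).1 (hsub t ht).2
    have heq' : ∀ t ∈ Set.Icc (0:ℝ) T,
        u t = u 0 + (1 / Real.Gamma γ) * ∫ s in (0:ℝ)..t, (t - s) ^ (γ - 1) * f (u s) := by
      intro t ht
      rw [hu0]
      exact heqS t (hsub t ht).1 (hsub t ht).2
    exact core_all hγ hf hT huc hmem' heq' (by rw [hu0]; exact hfu₀)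
  constructor
  · intro t ht htb
    have h1 := (hS ht htb).1 t ⟨ht.le, le_rfl⟩
    rwa [hu0] at h1
  · show interior (closure _) = ∅
    rw [Set.eq_empty_iff_forall_notMem]
    intro x hx
    set Z := {t : ℝ | 0 < t ∧ ENNReal.ofReal t < Tb ∧ f (u t) = 0} with hZ_def
    have hxc : x ∈ closure Z := interior_subset hx
    have hZnn : Z ⊆ Set.Ici (0:ℝ) := fun z hz => hz.1.le
    have hx0 : 0 ≤ x := closure_minimal hZnn isClosed_Ici hxc
    obtain ⟨ε, hε, hball⟩ := Metric.isOpen_iff.1 isOpen_interior x hx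
    have hballc : Metric.ball x ε ⊆ closure Z := fun y hy => interior_subset (hball hy)
    have hy₀ : x + 3*ε/4 ∈ closure Z := by
      apply hballc
      rw [Metric.mem_ball, Real.dist_eq, show x + 3*ε/4 - x = 3*ε/4 by ring,
        abs_of_nonneg (by linarith)]
      linarith
    obtain ⟨z, hzV, hzZ⟩ := (_root_.mem_closure_iff.1 hy₀) (Set.Ioo (x + ε/2) (x + ε))
      isOpen_Ioo ⟨by linarith, by linarith⟩
    have hzpos : 0 < z := by have := hzV.1; linarith
    have hkey : ∀ s : ℝ, 0 ≤ s → s < z → ENNReal.ofReal s < Tb := by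
      intro s hs hsz
      calc ENNReal.ofReal s < ENNReal.ofReal z := by
            rw [ENNReal.ofReal_lt_ofReal_iff hzpos]
            exact hsz
        _ < Tb := hzZ.2.1
    have ht₂z : x + ε/2 < z := hzV.1
    have ht₁pos : 0 < x + ε/4 := by linarith
    have hzero : ∀ s ∈ Set.Icc (x + ε/4) (x + ε/2), f (u s) = 0 := by
      intro s hs
      have hs0 : 0 < s := lt_of_lt_of_le ht₁pos hs.1
      have hsz : s < z := lt_of_le_of_lt hs.2 ht₂z
      have hsc : s ∈ closure Z := by
        apply hballc
        rw [Metric.mem_ball, Real.dist_eq, abs_lt]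
        constructor
        · linarith [hs.1]
        · linarith [hs.2]
      have hIooS : Set.Ioo (0:ℝ) z ⊆ {t : ℝ | 0 ≤ t ∧ ENNReal.ofReal t < Tb} := by
        intro y hy; exact ⟨hy.1.le, hkey y hy.1.le hy.2⟩
      have hSnb : {t : ℝ | 0 ≤ t ∧ ENNReal.ofReal t < Tb} ∈ 𝓝 s :=
        Filter.mem_of_superset (isOpen_Ioo.mem_nhds ⟨hs0, hsz⟩) hIooS
      have hcu : ContinuousAt u s := hcont.continuousAt hSnb
      have hcf : ContinuousAt f (u s) := by
        have hum : u s ∈ Set.Ioo α β := hmemS s hs0.le (hkey s hs0.le hsz)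
        exact (lip_continuousOn hf).continuousAt (isOpen_Ioo.mem_nhds hum)
      have hcg : ContinuousAt (fun y => f (u y)) s := hcf.comp hcu
      obtain ⟨w, hwZ, hwlim⟩ := mem_closure_iff_seq_limit.1 hsc
      have hlim : Tendsto (fun n => f (u (w n))) atTop (𝓝 (f (u s))) :=
        hcg.tendsto.comp hwlim
      have hzero' : (fun n => f (u (w n))) = fun _ => (0:ℝ) := funext fun n => (hwZ n).2.2
      rw [hzero'] at hlim
      exact tendsto_nhds_unique hlim tendsto_const_nhds
    have ht₂Tb : ENNReal.ofReal (x + ε/2) < Tb := hkey _ (by linarith) ht₂z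
    exact (hS (by linarith : (0:ℝ) < x + ε/2) ht₂Tb).2 (x + ε/4) (x + ε/2)
      ht₁pos (by linarith) le_rfl hzero
end

section
/- Let γ ∈ (0,1) and let f be locally Lipschitz continuous and non-decreasing. If u₁ and u₂ are solutions of D_c^γ u = f(u) on a common interval [0,T) with initial values u₁(0) < u₂(0), then u₁(t) < u₂(t) for all t ∈ [0,T); in particular distinct solution curves of the autonomous fractional ODE do not intersect. -/
open MeasureTheory Real Filter Set Asymptotics
open scoped ENNReal Topology

/-- solution curves of the autonomous fractional ODE with a
non-decreasing locally Lipschitz right-hand side do not intersect. -/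
theorem stmt5 (γ a₁ a₂ : ℝ) (f : ℝ → ℝ) (T : ℝ≥0∞) (u₁ u₂ : ℝ → ℝ)
    (hγ : γ ∈ Set.Ioo (0:ℝ) 1)
    (hlip : LocallyLipschitz f) (hmono : Monotone f)
    (h₁ : IsSolUpTo γ f Set.univ a₁ u₁ T)
    (h₂ : IsSolUpTo γ f Set.univ a₂ u₂ T)
    (h₀ : a₁ < a₂) :
    ∀ t : ℝ, 0 ≤ t → ENNReal.ofReal t < T → u₁ t < u₂ t := by
  intro t ht hT
  by_contra hcon
  push_neg at hcon
  obtain ⟨hu₁0, hc₁, -, heq₁⟩ := h₁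
  obtain ⟨hu₂0, hc₂, -, heq₂⟩ := h₂
  set S : Set ℝ := {s : ℝ | 0 ≤ s ∧ ENNReal.ofReal s < T} with hS
  set A : Set ℝ := {s : ℝ | 0 ≤ s ∧ ENNReal.ofReal s < T ∧ u₂ s ≤ u₁ s} with hAdef
  have hAne : A.Nonempty := ⟨t, ht, hT, hcon⟩
  have hAbdd : BddBelow A := ⟨0, fun s hs => hs.1⟩
  set t₀ := sInf A with ht₀def
  have ht₀0 : 0 ≤ t₀ := le_csInf hAne fun s hs => hs.1
  have ht₀t : t₀ ≤ t := csInf_le hAbdd ⟨ht, hT, hcon⟩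
  have ht₀T : ENNReal.ofReal t₀ < T :=
    lt_of_le_of_lt (ENNReal.ofReal_le_ofReal ht₀t) hT
  have ht₀S : t₀ ∈ S := ⟨ht₀0, ht₀T⟩
  have hsubIcc : Set.Icc 0 t₀ ⊆ S := fun s hs =>
    ⟨hs.1, lt_of_le_of_lt (ENNReal.ofReal_le_ofReal hs.2) ht₀T⟩
  -- strict inequality before t₀
  have hlt : ∀ s, 0 ≤ s → s < t₀ → u₁ s < u₂ s := by
    intro s hs0 hst
    by_contra h
    push_neg at h
    have hsT : ENNReal.ofReal s < T :=
      lt_of_le_of_lt (ENNReal.ofReal_le_ofReal hst.le) ht₀T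
    exact absurd (csInf_le hAbdd ⟨hs0, hsT, h⟩) (not_le.mpr hst)
  -- u₂ t₀ ≤ u₁ t₀ by continuity
  have hA_sub_S : A ⊆ S := fun s hs => ⟨hs.1, hs.2.1⟩
  have ht₀cl : t₀ ∈ closure A := csInf_mem_closure hAne hAbdd
  have hne : (𝓝[A] t₀).NeBot := mem_closure_iff_nhdsWithin_neBot.mp ht₀cl
  have htend : Tendsto (fun s => u₁ s - u₂ s) (𝓝[A] t₀) (𝓝 (u₁ t₀ - u₂ t₀)) :=
    (((hc₁.continuousWithinAt ht₀S).sub (hc₂.continuousWithinAt ht₀S)).mono hA_sub_S)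
  have hle : u₂ t₀ ≤ u₁ t₀ := by
    have h0 : 0 ≤ u₁ t₀ - u₂ t₀ :=
      ge_of_tendsto htend
        (eventually_nhdsWithin_of_forall fun s hs => sub_nonneg.mpr hs.2.2)
    linarith
  -- integral equations at t₀
  have hE₁ := heq₁ t₀ ht₀0 ht₀T
  have hE₂ := heq₂ t₀ ht₀0 ht₀T
  -- integrability of the weight
  have hw : IntervalIntegrable (fun s => (t₀ - s) ^ (γ - 1)) volume 0 t₀ := by
    have h1 : IntervalIntegrable (fun x : ℝ => x ^ (γ - 1)) volume 0 t₀ :=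
      intervalIntegral.intervalIntegrable_rpow' (by linarith [hγ.1])
    have h2 := h1.comp_sub_left t₀
    simpa using h2.symm
  have huIcc : Set.uIcc (0:ℝ) t₀ = Set.Icc 0 t₀ := Set.uIcc_of_le ht₀0
  have hcf : Continuous f := hlip.continuous
  have hcu₁ : ContinuousOn (fun s => f (u₁ s)) (Set.uIcc (0:ℝ) t₀) := by
    rw [huIcc]
    exact hcf.comp_continuousOn (hc₁.mono hsubIcc)
  have hcu₂ : ContinuousOn (fun s => f (u₂ s)) (Set.uIcc (0:ℝ) t₀) := by
    rw [huIcc]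
    exact hcf.comp_continuousOn (hc₂.mono hsubIcc)
  have hint₁ : IntervalIntegrable (fun s => (t₀ - s) ^ (γ - 1) * f (u₁ s)) volume 0 t₀ :=
    hw.mul_continuousOn hcu₁
  have hint₂ : IntervalIntegrable (fun s => (t₀ - s) ^ (γ - 1) * f (u₂ s)) volume 0 t₀ :=
    hw.mul_continuousOn hcu₂
  -- the integral of the difference is nonnegative
  have hnonneg : 0 ≤ ∫ s in (0:ℝ)..t₀,
      ((t₀ - s) ^ (γ - 1) * f (u₂ s) - (t₀ - s) ^ (γ - 1) * f (u₁ s)) := by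
    apply intervalIntegral.integral_nonneg ht₀0
    intro s hs
    rcases lt_or_eq_of_le hs.2 with h | h
    · have : f (u₁ s) ≤ f (u₂ s) := hmono (hlt s hs.1 h).le
      have hwpos : (0:ℝ) ≤ (t₀ - s) ^ (γ - 1) :=
        Real.rpow_nonneg (by linarith) _
      nlinarith
    · subst h
      simp [Real.zero_rpow (by linarith [hγ.2] : γ - 1 ≠ 0)]
  have hsub : (∫ s in (0:ℝ)..t₀,
      ((t₀ - s) ^ (γ - 1) * f (u₂ s) - (t₀ - s) ^ (γ - 1) * f (u₁ s)))
      = (∫ s in (0:ℝ)..t₀, (t₀ - s) ^ (γ - 1) * f (u₂ s))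
        - ∫ s in (0:ℝ)..t₀, (t₀ - s) ^ (γ - 1) * f (u₁ s) :=
    intervalIntegral.integral_sub hint₂ hint₁
  rw [hsub] at hnonneg
  have hcpos : 0 < 1 / Real.Gamma γ := by
    have := Real.Gamma_pos_of_pos hγ.1
    positivity
  have hfinal : 0 ≤ (1 / Real.Gamma γ) *
      ((∫ s in (0:ℝ)..t₀, (t₀ - s) ^ (γ - 1) * f (u₂ s))
        - ∫ s in (0:ℝ)..t₀, (t₀ - s) ^ (γ - 1) * f (u₁ s)) :=
    mul_nonneg hcpos.le hnonneg
  rw [mul_sub] at hfinal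
  linarith
end

section
/- (Integral comparison principle.) Let γ ∈ (0,1), let f be locally Lipschitz and non-decreasing on (α, β), let u be the solution of D_c^γ u = f(u), u(0) = u₀ ∈ (α, β), on [0, T_b), and let v : [0,T) → (α, β) be continuous. If v(t) ≤ u₀ + (1/Γ(γ)) ∫₀ᵗ (t−s)^{γ−1} f(v(s)) ds for all t ∈ [0,T), then v(t) ≤ u(t) on [0, min(T, T_b)). Similarly, if v(t) ≥ u₀ + (1/Γ(γ)) ∫₀ᵗ (t−s)^{γ−1} f(v(s)) ds for all t ∈ [0,T), then v(t) ≥ u(t) on [0, min(T, T_b)). -/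
open MeasureTheory Real Filter Set Asymptotics
open scoped ENNReal Topology

set_option maxHeartbeats 2000000 in
lemma comp_core (γ α β u₀ : ℝ) (f : ℝ → ℝ) (a b : ℝ → ℝ) (Ta Tb : ℝ≥0∞)
    (hγ : γ ∈ Set.Ioo (0:ℝ) 1)
    (hf : ∀ x ∈ Set.Ioo α β, ∃ K : NNReal, ∃ s ∈ 𝓝[Set.Ioo α β] x, LipschitzOnWith K f s)
    (hmono : MonotoneOn f (Set.Ioo α β))
    (hac : ContinuousOn a {t : ℝ | 0 ≤ t ∧ ENNReal.ofReal t < Ta})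
    (hamem : ∀ t : ℝ, 0 ≤ t → ENNReal.ofReal t < Ta → a t ∈ Set.Ioo α β)
    (hbc : ContinuousOn b {t : ℝ | 0 ≤ t ∧ ENNReal.ofReal t < Tb})
    (hbmem : ∀ t : ℝ, 0 ≤ t → ENNReal.ofReal t < Tb → b t ∈ Set.Ioo α β)
    (hai : ∀ t : ℝ, 0 ≤ t → ENNReal.ofReal t < Ta →
      a t ≤ u₀ + (1 / Real.Gamma γ) * ∫ s in (0:ℝ)..t, (t - s) ^ (γ - 1) * f (a s))
    (hbi : ∀ t : ℝ, 0 ≤ t → ENNReal.ofReal t < Tb →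
      u₀ + (1 / Real.Gamma γ) * (∫ s in (0:ℝ)..t, (t - s) ^ (γ - 1) * f (b s)) ≤ b t) :
    ∀ t : ℝ, 0 ≤ t → ENNReal.ofReal t < min Ta Tb → a t ≤ b t := by
  intro t₁ ht₁0 ht₁m
  by_contra hcon
  push_neg at hcon
  obtain ⟨hγ0, hγ1⟩ := hγ
  have hγne : γ ≠ 0 := ne_of_gt hγ0
  have hTa : ENNReal.ofReal t₁ < Ta := lt_of_lt_of_le ht₁m (min_le_left _ _)
  have hTb : ENNReal.ofReal t₁ < Tb := lt_of_lt_of_le ht₁m (min_le_right _ _)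
  set c : ℝ := 1 / Real.Gamma γ with hc_def
  have hc : 0 < c := by
    have := Real.Gamma_pos_of_pos hγ0
    positivity
  clear_value c
  -- membership of Icc 0 t₁ in the two domains
  have hmemA : ∀ t : ℝ, t ∈ Icc 0 t₁ → 0 ≤ t ∧ ENNReal.ofReal t < Ta := fun t ht =>
    ⟨ht.1, lt_of_le_of_lt (ENNReal.ofReal_le_ofReal ht.2) hTa⟩
  have hmemB : ∀ t : ℝ, t ∈ Icc 0 t₁ → 0 ≤ t ∧ ENNReal.ofReal t < Tb := fun t ht =>
    ⟨ht.1, lt_of_le_of_lt (ENNReal.ofReal_le_ofReal ht.2) hTb⟩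
  -- continuity of f on Ioo α β
  have hfc : ContinuousOn f (Set.Ioo α β) := by
    intro x hx
    obtain ⟨K, s, hs, hK⟩ := hf x hx
    have hxs : x ∈ s := mem_of_mem_nhdsWithin hx hs
    exact (hK.continuousOn x hxs).mono_left (nhdsWithin_le_iff.mpr hs)
  -- continuity of the relevant maps on Icc 0 t₁
  have haC : ContinuousOn a (Icc 0 t₁) := hac.mono (fun t ht => hmemA t ht)
  have hbC : ContinuousOn b (Icc 0 t₁) := hbc.mono (fun t ht => hmemB t ht)
  have hfaC : ContinuousOn (fun s => f (a s)) (Icc 0 t₁) :=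
    hfc.comp haC (fun s hs => hamem s (hmemA s hs).1 (hmemA s hs).2)
  have hfbC : ContinuousOn (fun s => f (b s)) (Icc 0 t₁) :=
    hfc.comp hbC (fun s hs => hbmem s (hmemB s hs).1 (hmemB s hs).2)
  -- integrability helpers
  have hrint : ∀ t p q : ℝ, IntervalIntegrable (fun s => (t - s) ^ (γ - 1)) volume p q := by
    intro t p q
    have h1 : (-1 : ℝ) < γ - 1 := by linarith
    have := (intervalIntegral.intervalIntegrable_rpow' (a := t - p) (b := t - q) h1).comp_sub_left t
    simpa using this
  have hpint : ∀ g : ℝ → ℝ, ContinuousOn g (Icc 0 t₁) → ∀ t p q : ℝ, p ∈ Icc 0 t₁ →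
      q ∈ Icc 0 t₁ → IntervalIntegrable (fun s => (t - s) ^ (γ - 1) * g s) volume p q := by
    intro g hg t p q hp hq
    exact (hrint t p q).mul_continuousOn (hg.mono (uIcc_subset_Icc hp hq))
  -- values of a and b at 0
  have h0dom : (0:ℝ) ∈ Icc (0:ℝ) t₁ := ⟨le_refl _, ht₁0⟩
  have ha0 : a 0 ≤ u₀ := by
    have := hai 0 (hmemA 0 h0dom).1 (hmemA 0 h0dom).2
    simpa using this
  have hb0 : u₀ ≤ b 0 := by
    have := hbi 0 (hmemB 0 h0dom).1 (hmemB 0 h0dom).2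
    simpa using this
  -- the set where a > b, and its infimum
  set S : Set ℝ := {t | t ∈ Icc 0 t₁ ∧ b t < a t} with hS_def
  have ht₁S : t₁ ∈ S := ⟨⟨ht₁0, le_refl _⟩, hcon⟩
  have hSne : S.Nonempty := ⟨t₁, ht₁S⟩
  have hSbdd : BddBelow S := ⟨0, fun x hx => hx.1.1⟩
  set t₀ : ℝ := sInf S with ht₀_def
  have ht₀0 : 0 ≤ t₀ := le_csInf hSne (fun x hx => hx.1.1)
  have ht₀le : t₀ ≤ t₁ := csInf_le hSbdd ht₁S
  have ht₀Icc : t₀ ∈ Icc 0 t₁ := ⟨ht₀0, ht₀le⟩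
  -- before t₀, a ≤ b
  have hbefore : ∀ s : ℝ, 0 ≤ s → s < t₀ → a s ≤ b s := by
    intro s hs0 hst
    by_contra h
    push_neg at h
    have : s ∈ S := ⟨⟨hs0, le_trans (le_of_lt hst) ht₀le⟩, h⟩
    exact absurd (csInf_le hSbdd this) (not_le.mpr hst)
  set g : ℝ → ℝ := fun t => a t - b t with hg_def
  have hgC : ContinuousOn g (Icc 0 t₁) := haC.sub hbC
  clear_value g
  -- a t₀ = b t₀
  have hge : b t₀ ≤ a t₀ := by
    have hcl : t₀ ∈ closure S := csInf_mem_closure hSne hSbdd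
    have hne : (𝓝[S] t₀).NeBot := mem_closure_iff_nhdsWithin_neBot.mp hcl
    have hct : ContinuousWithinAt g S t₀ := (hgC t₀ ht₀Icc).mono (fun x hx => hx.1)
    have hgood : ∀ᶠ x in 𝓝[S] t₀, (0:ℝ) ≤ g x := by
      filter_upwards [eventually_mem_nhdsWithin] with x hx
      simp only [hg_def]
      exact le_of_lt (sub_pos.mpr hx.2)
    have h2 : 0 ≤ g t₀ := ge_of_tendsto hct hgood
    simp only [hg_def] at h2
    linarith
  have hle₀ : a t₀ ≤ b t₀ := by
    rcases eq_or_lt_of_le ht₀0 with h0 | h0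
    · rw [← h0]; linarith
    · have hcl : t₀ ∈ closure (Ico 0 t₀) := by
        rw [closure_Ico (ne_of_lt h0)]
        exact ⟨ht₀0, le_refl _⟩
      have hne : (𝓝[Ico 0 t₀] t₀).NeBot := mem_closure_iff_nhdsWithin_neBot.mp hcl
      have hct : ContinuousWithinAt g (Ico 0 t₀) t₀ :=
        (hgC t₀ ht₀Icc).mono (fun x hx => ⟨hx.1, le_trans (le_of_lt hx.2) ht₀le⟩)
      have hgood : ∀ᶠ x in 𝓝[Ico 0 t₀] t₀, g x ≤ (0:ℝ) := by
        filter_upwards [eventually_mem_nhdsWithin] with x hx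
        simp only [hg_def]
        exact sub_nonpos.mpr (hbefore x hx.1 hx.2)
      have h2 : g t₀ ≤ 0 := le_of_tendsto hct hgood
      simp only [hg_def] at h2
      linarith
  have heq : a t₀ = b t₀ := le_antisymm hle₀ hge
  have ht₀lt : t₀ < t₁ := lt_of_le_of_ne ht₀le (fun h => by rw [h] at heq; linarith)
  have hle' : ∀ s : ℝ, 0 ≤ s → s ≤ t₀ → a s ≤ b s := by
    intro s hs0 hst
    rcases eq_or_lt_of_le hst with h | h
    · rw [h]; exact hle₀
    · exact hbefore s hs0 h
  set x₀ : ℝ := a t₀ with hx₀_def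
  have hx₀ : x₀ ∈ Set.Ioo α β := hamem t₀ (hmemA t₀ ht₀Icc).1 (hmemA t₀ ht₀Icc).2
  -- Lipschitz constant near x₀
  obtain ⟨K, s, hs, hK⟩ := hf x₀ hx₀
  have hsnhds : s ∩ Set.Ioo α β ∈ 𝓝 x₀ := by
    rw [nhdsWithin_eq_nhds.mpr (isOpen_Ioo.mem_nhds hx₀)] at hs
    exact inter_mem hs (isOpen_Ioo.mem_nhds hx₀)
  obtain ⟨ε, hε, hball⟩ := Metric.nhds_basis_closedBall.mem_iff.mp hsnhds
  set J : Set ℝ := Metric.closedBall x₀ ε with hJ_def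
  have hKJ : LipschitzOnWith K f J := hK.mono (fun y hy => (hball hy).1)
  have hJD : J ⊆ Set.Ioo α β := fun y hy => (hball hy).2
  -- continuity at t₀ gives δ₁
  obtain ⟨δa, hδa, hδa'⟩ := Metric.continuousWithinAt_iff.mp (haC t₀ ht₀Icc) ε hε
  obtain ⟨δb, hδb, hδb'⟩ := Metric.continuousWithinAt_iff.mp (hbC t₀ ht₀Icc) ε hε
  set Kr : ℝ := (K : ℝ) with hKr_def
  have hKr0 : 0 ≤ Kr := K.coe_nonneg
  set C : ℝ := c * Kr / γ with hC_def
  have hC0 : 0 ≤ C := by positivity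
  set δ₂ : ℝ := (1 / (2 * (C + 1))) ^ (γ⁻¹) with hδ₂_def
  have hδ₂pos : 0 < δ₂ := Real.rpow_pos_of_pos (by positivity) _
  have hδ₂γ : δ₂ ^ γ = 1 / (2 * (C + 1)) := by
    rw [hδ₂_def]; exact Real.rpow_inv_rpow (by positivity) hγne
  clear_value Kr C δ₂
  set δ : ℝ := min (min (min (δa / 2) (δb / 2)) δ₂) (t₁ - t₀) with hδ_def
  have hδpos : 0 < δ := by
    apply lt_min (lt_min (lt_min _ _) hδ₂pos) (by linarith)
    · linarith
    · linarith
  have hδa2 : δ < δa := lt_of_le_of_lt ((min_le_left _ _).trans ((min_le_left _ _).trans (min_le_left _ _))) (by linarith)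
  have hδb2 : δ < δb := lt_of_le_of_lt ((min_le_left _ _).trans ((min_le_left _ _).trans (min_le_right _ _))) (by linarith)
  have hδδ₂ : δ ≤ δ₂ := (min_le_left _ _).trans (min_le_right _ _)
  have hδt₁ : t₀ + δ ≤ t₁ := by
    have := min_le_right (min (min (δa / 2) (δb / 2)) δ₂) (t₁ - t₀)
    linarith [this]
  clear_value δ
  -- a point of S within δ of t₀
  obtain ⟨s₀, hs₀S, hs₀lt⟩ := (csInf_lt_iff hSbdd hSne).mp
    (show sInf S < t₀ + δ by rw [← ht₀_def]; linarith)
  have hs₀ge : t₀ ≤ s₀ := csInf_le hSbdd hs₀S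
  have hs₀gt : b s₀ < a s₀ := hs₀S.2
  clear ht₀_def hS_def ht₁S hSne hSbdd hs₀S
  clear_value t₀ S
  -- the key smallness estimate
  have hδγ : C * δ ^ γ ≤ 1 / 2 := by
    have h1 : δ ^ γ ≤ δ₂ ^ γ := Real.rpow_le_rpow (le_of_lt hδpos) hδδ₂ (le_of_lt hγ0)
    have h2 : δ₂ ^ γ = 1 / (2 * (C + 1)) := hδ₂γ
    have h3 : C * δ ^ γ ≤ C * (1 / (2 * (C + 1))) := by
      rw [← h2]; exact mul_le_mul_of_nonneg_left h1 hC0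
    have h4 : C * (1 / (2 * (C + 1))) ≤ 1 / 2 := by
      have hC1 : (0:ℝ) < 2 * (C + 1) := by linarith
      rw [mul_one_div, div_le_div_iff₀ hC1 (by norm_num : (0:ℝ) < 2)]
      linarith
    linarith
  have hIsub : Icc t₀ (t₀ + δ) ⊆ Icc 0 t₁ := fun x hx => ⟨le_trans ht₀0 hx.1, le_trans hx.2 hδt₁⟩
  -- a and b stay in J on I
  have hJmem : ∀ t : ℝ, t ∈ Icc t₀ (t₀ + δ) → a t ∈ J ∧ b t ∈ J := by
    intro t ht
    have htIcc : t ∈ Icc 0 t₁ := hIsub ht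
    have hdist : dist t t₀ < min δa δb := by
      rw [Real.dist_eq, abs_of_nonneg (by linarith [ht.1])]
      have := ht.2
      have h1 : t - t₀ ≤ δ := by linarith
      exact lt_of_le_of_lt h1 (lt_min hδa2 hδb2)
    constructor
    · exact Metric.mem_closedBall.mpr (le_of_lt (hδa' htIcc (lt_of_lt_of_le hdist (min_le_left _ _))))
    · have := hδb' htIcc (lt_of_lt_of_le hdist (min_le_right _ _))
      rw [← heq] at this
      exact Metric.mem_closedBall.mpr (le_of_lt this)
  clear_value J
  -- the maximum of g on I
  obtain ⟨t₂, ht₂I, ht₂max⟩ := isCompact_Icc.exists_isMaxOn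
    ⟨t₀, ⟨le_refl _, by linarith⟩⟩ (hgC.mono hIsub)
  set M : ℝ := g t₂ with hM_def
  have hMmax : ∀ x ∈ Icc t₀ (t₀ + δ), g x ≤ M := fun x hx => ht₂max hx
  have hMpos : 0 < M := by
    have hs₀I : s₀ ∈ Icc t₀ (t₀ + δ) := ⟨hs₀ge, le_of_lt hs₀lt⟩
    have h1 : 0 < g s₀ := by simp only [hg_def]; linarith
    linarith [hMmax s₀ hs₀I]
  clear_value M
  -- the key estimate on I
  have hkey : ∀ t : ℝ, t ∈ Icc t₀ (t₀ + δ) → g t ≤ C * δ ^ γ * M := by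
    intro t htI
    have htIcc : t ∈ Icc 0 t₁ := hIsub htI
    have ht₀t : t₀ ≤ t := htI.1
    have ha' := hai t (hmemA t htIcc).1 (hmemA t htIcc).2
    have hb' := hbi t (hmemB t htIcc).1 (hmemB t htIcc).2
    have hdiffC : ContinuousOn (fun s => f (a s) - f (b s)) (Icc 0 t₁) := hfaC.sub hfbC
    have hia : IntervalIntegrable (fun s => (t - s) ^ (γ - 1) * f (a s)) volume 0 t :=
      hpint _ hfaC t 0 t h0dom htIcc
    have hib : IntervalIntegrable (fun s => (t - s) ^ (γ - 1) * f (b s)) volume 0 t :=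
      hpint _ hfbC t 0 t h0dom htIcc
    have hstep1 : g t ≤ c * ∫ s in (0:ℝ)..t, (t - s) ^ (γ - 1) * (f (a s) - f (b s)) := by
      have hsub : (∫ s in (0:ℝ)..t, (t - s) ^ (γ - 1) * (f (a s) - f (b s)))
          = (∫ s in (0:ℝ)..t, (t - s) ^ (γ - 1) * f (a s))
            - ∫ s in (0:ℝ)..t, (t - s) ^ (γ - 1) * f (b s) := by
        rw [← intervalIntegral.integral_sub hia hib]
        congr 1
        ext s
        ring
      rw [hsub, mul_sub]
      simp only [hg_def]
      linarith
    -- split the integral at t₀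
    have hi1 : IntervalIntegrable (fun s => (t - s) ^ (γ - 1) * (f (a s) - f (b s))) volume 0 t₀ :=
      hpint _ hdiffC t 0 t₀ h0dom ht₀Icc
    have hi2 : IntervalIntegrable (fun s => (t - s) ^ (γ - 1) * (f (a s) - f (b s))) volume t₀ t :=
      hpint _ hdiffC t t₀ t ht₀Icc htIcc
    have hsplit : (∫ s in (0:ℝ)..t, (t - s) ^ (γ - 1) * (f (a s) - f (b s)))
        = (∫ s in (0:ℝ)..t₀, (t - s) ^ (γ - 1) * (f (a s) - f (b s)))
          + ∫ s in t₀..t, (t - s) ^ (γ - 1) * (f (a s) - f (b s)) :=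
      (intervalIntegral.integral_add_adjacent_intervals hi1 hi2).symm
    -- first integral is ≤ 0
    have hfirst : (∫ s in (0:ℝ)..t₀, (t - s) ^ (γ - 1) * (f (a s) - f (b s))) ≤ 0 := by
      have hmono0 : (∫ s in (0:ℝ)..t₀, (t - s) ^ (γ - 1) * (f (a s) - f (b s)))
          ≤ ∫ s in (0:ℝ)..t₀, (0:ℝ) := by
        refine intervalIntegral.integral_mono_on ht₀0 hi1 intervalIntegrable_const ?_
        intro s hsIcc
        have hsd : s ∈ Icc 0 t₁ := ⟨hsIcc.1, le_trans hsIcc.2 ht₀le⟩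
        have hrp : 0 ≤ (t - s) ^ (γ - 1) := Real.rpow_nonneg (by linarith [hsIcc.2]) _
        have hfle : f (a s) - f (b s) ≤ 0 := by
          have hab : a s ≤ b s := hle' s hsIcc.1 hsIcc.2
          have := hmono (hamem s (hmemA s hsd).1 (hmemA s hsd).2)
            (hbmem s (hmemB s hsd).1 (hmemB s hsd).2) hab
          linarith
        exact mul_nonpos_iff.mpr (Or.inl ⟨hrp, hfle⟩)
      simpa using hmono0
    -- second integral
    have hsecond : (∫ s in t₀..t, (t - s) ^ (γ - 1) * (f (a s) - f (b s)))
        ≤ Kr * M * ((t - t₀) ^ γ / γ) := by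
      have hi3 : IntervalIntegrable (fun s => (t - s) ^ (γ - 1) * (Kr * M)) volume t₀ t :=
        (hrint t t₀ t).mul_const _
      have hmono2 : (∫ s in t₀..t, (t - s) ^ (γ - 1) * (f (a s) - f (b s)))
          ≤ ∫ s in t₀..t, (t - s) ^ (γ - 1) * (Kr * M) := by
        apply intervalIntegral.integral_mono_on ht₀t hi2 hi3
        intro s hsIcc
        have hsI : s ∈ Icc t₀ (t₀ + δ) := ⟨hsIcc.1, le_trans hsIcc.2 htI.2⟩
        obtain ⟨haJ, hbJ⟩ := hJmem s hsI
        have hrp : 0 ≤ (t - s) ^ (γ - 1) := Real.rpow_nonneg (by linarith [hsIcc.2]) _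
        have hfb : f (a s) - f (b s) ≤ Kr * M := by
          rcases le_or_gt (a s) (b s) with h | h
          · have := hmono (hJD haJ) (hJD hbJ) h
            nlinarith
          · have hd := hKJ.dist_le_mul (a s) haJ (b s) hbJ
            rw [Real.dist_eq, Real.dist_eq, ← hKr_def] at hd
            have habs : |a s - b s| = a s - b s := abs_of_pos (by linarith)
            have hgsM : a s - b s ≤ M := by
              have := hMmax s hsI; simpa [hg_def] using this
            calc f (a s) - f (b s) ≤ |f (a s) - f (b s)| := le_abs_self _
              _ ≤ Kr * |a s - b s| := hd
              _ = Kr * (a s - b s) := by rw [habs]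
              _ ≤ Kr * M := mul_le_mul_of_nonneg_left hgsM hKr0
        exact mul_le_mul_of_nonneg_left hfb hrp
      have hval : (∫ s in t₀..t, (t - s) ^ (γ - 1)) = (t - t₀) ^ γ / γ := by
        have h1 : (∫ s in t₀..t, (t - s) ^ (γ - 1))
            = ∫ x in (t - t)..(t - t₀), x ^ (γ - 1) :=
          intervalIntegral.integral_comp_sub_left (fun x => x ^ (γ - 1)) t
        rw [h1, sub_self, integral_rpow (Or.inl (by linarith : (-1:ℝ) < γ - 1)),
          sub_add_cancel, Real.zero_rpow hγne, sub_zero]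
      calc (∫ s in t₀..t, (t - s) ^ (γ - 1) * (f (a s) - f (b s)))
          ≤ ∫ s in t₀..t, (t - s) ^ (γ - 1) * (Kr * M) := hmono2
        _ = (∫ s in t₀..t, (t - s) ^ (γ - 1)) * (Kr * M) := intervalIntegral.integral_mul_const _ _
        _ = Kr * M * ((t - t₀) ^ γ / γ) := by rw [hval]; ring
    have hpow : (t - t₀) ^ γ ≤ δ ^ γ := by
      apply Real.rpow_le_rpow (by linarith) (by linarith [htI.2]) (le_of_lt hγ0)
    have hKM : 0 ≤ Kr * M := by positivity
    calc g t ≤ c * ∫ s in (0:ℝ)..t, (t - s) ^ (γ - 1) * (f (a s) - f (b s)) := hstep1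
      _ = c * ((∫ s in (0:ℝ)..t₀, (t - s) ^ (γ - 1) * (f (a s) - f (b s)))
          + ∫ s in t₀..t, (t - s) ^ (γ - 1) * (f (a s) - f (b s))) := by rw [hsplit]
      _ ≤ c * (0 + Kr * M * ((t - t₀) ^ γ / γ)) := by
          apply mul_le_mul_of_nonneg_left _ (le_of_lt hc)
          exact add_le_add hfirst hsecond
      _ ≤ c * (0 + Kr * M * (δ ^ γ / γ)) := by gcongr
      _ = C * δ ^ γ * M := by rw [hC_def]; ring
  -- conclude
  have hfinal : M ≤ C * δ ^ γ * M := by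
    have := hkey t₂ ht₂I; rwa [← hM_def] at this
  have : C * δ ^ γ * M ≤ (1/2) * M :=
    mul_le_mul_of_nonneg_right hδγ (le_of_lt hMpos)
  linarith

/-- integral comparison principle. -/
theorem stmt8 (γ α β u₀ : ℝ) (f : ℝ → ℝ) (u v : ℝ → ℝ) (T : ℝ≥0∞)
    (hγ : γ ∈ Set.Ioo (0:ℝ) 1) (hαβ : α < β)
    (hf : ∀ x ∈ Set.Ioo α β, ∃ K : NNReal, ∃ s ∈ 𝓝[Set.Ioo α β] x, LipschitzOnWith K f s)
    (hmono : MonotoneOn f (Set.Ioo α β))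
    (hu₀ : u₀ ∈ Set.Ioo α β)
    (hu : IsSolUpTo γ f (Set.Ioo α β) u₀ u (maxTime γ f (Set.Ioo α β) u₀))
    (hvc : ContinuousOn v {t : ℝ | 0 ≤ t ∧ ENNReal.ofReal t < T})
    (hvmem : ∀ t : ℝ, 0 ≤ t → ENNReal.ofReal t < T → v t ∈ Set.Ioo α β) :
    ((∀ t : ℝ, 0 ≤ t → ENNReal.ofReal t < T →
        v t ≤ u₀ + (1 / Real.Gamma γ) * ∫ s in (0:ℝ)..t, (t - s) ^ (γ - 1) * f (v s)) →
      ∀ t : ℝ, 0 ≤ t → ENNReal.ofReal t < min T (maxTime γ f (Set.Ioo α β) u₀) →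
        v t ≤ u t) ∧
    ((∀ t : ℝ, 0 ≤ t → ENNReal.ofReal t < T →
        u₀ + (1 / Real.Gamma γ) * (∫ s in (0:ℝ)..t, (t - s) ^ (γ - 1) * f (v s)) ≤ v t) →
      ∀ t : ℝ, 0 ≤ t → ENNReal.ofReal t < min T (maxTime γ f (Set.Ioo α β) u₀) →
        u t ≤ v t) := by
  obtain ⟨hu0, huc, humem, hueq⟩ := hu
  set Tm := maxTime γ f (Set.Ioo α β) u₀ with hTm
  constructor
  · intro h
    exact comp_core γ α β u₀ f v u T Tm hγ hf hmono hvc hvmem huc humem h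
      (fun t ht0 htT => le_of_eq (hueq t ht0 htT).symm)
  · intro h t ht0 htm
    rw [min_comm] at htm
    exact comp_core γ α β u₀ f u v Tm T hγ hf hmono huc humem hvc hvmem
      (fun t ht0 htT => le_of_eq (hueq t ht0 htT)) h t ht0 htm
end

section
/- Let γ ∈ (0,1) and let f₁, f₂ be locally Lipschitz on (α, β) with f₁(u) ≥ f₂(u) for all u ∈ (α, β), and assume at least one of f₁, f₂ is non-decreasing. Let u₁ and u₂ be the solutions of D_c^γ u = f₁(u) and D_c^γ u = f₂(u) on maximal intervals [0, T_b¹) and [0, T_b²) with initial values u₁(0) and u₂(0) respectively, where α < u₂(0) ≤ u₁(0) < β. Then u₁(t) ≥ u₂(t) for all t ∈ (0, min(T_b¹, T_b²)). -/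
open MeasureTheory Real Filter Set Asymptotics
open scoped ENNReal Topology

lemma aux_weight_integrable {γ t : ℝ} (hγ : (0:ℝ) < γ) :
    IntervalIntegrable (fun s => (t - s) ^ (γ - 1)) volume 0 t := by
  have h : IntervalIntegrable (fun x : ℝ => x ^ (γ - 1)) volume 0 t :=
    intervalIntegral.intervalIntegrable_rpow' (by linarith)
  simpa using (h.comp_sub_left t).symm

lemma aux_integrable {γ t : ℝ} (hγ : (0:ℝ) < γ) (ht : 0 ≤ t) {φ : ℝ → ℝ}
    (hφ : ContinuousOn φ (Icc 0 t)) :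
    IntervalIntegrable (fun s => (t - s) ^ (γ - 1) * φ s) volume 0 t :=
  (aux_weight_integrable hγ).mul_continuousOn (by rwa [uIcc_of_le ht])

lemma aux_weight_integral {γ t c : ℝ} (hγ : (0:ℝ) < γ) :
    ∫ s in c..t, (t - s) ^ (γ - 1) = (t - c) ^ γ / γ := by
  have h0 : (∫ s in c..t, (t - s) ^ (γ - 1)) = ∫ x in (0:ℝ)..(t - c), x ^ (γ - 1) := by
    have := intervalIntegral.integral_comp_sub_left (a := c) (b := t) (fun x : ℝ => x ^ (γ - 1)) t
    simpa using this
  rw [h0, integral_rpow (Or.inl (by linarith))]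
  rw [Real.zero_rpow (by linarith : γ - 1 + 1 ≠ 0)]
  ring_nf

lemma aux_cont_of_lip {f : ℝ → ℝ} {D : Set ℝ}
    (h : ∀ x ∈ D, ∃ K : NNReal, ∃ s ∈ nhdsWithin x D, LipschitzOnWith K f s) :
    ContinuousOn f D := by
  intro x hx
  obtain ⟨K, s, hs, hl⟩ := h x hx
  exact (hl.continuousOn.continuousWithinAt
    (mem_of_mem_nhdsWithin hx hs)).mono_of_mem_nhdsWithin hs

lemma aux_final {C Kr M P γ d E E₁ E₂ : ℝ} (hC : 0 < C) (hM : 0 < M)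
    (hd : 0 ≤ d)
    (hInt : -M = d + C * E) (hsplit : E₁ + E₂ = E) (hnn : 0 ≤ E₁)
    (hlow : -(Kr * M) * (P / γ) ≤ E₂) (hhalf : C * Kr * P / γ ≤ 1 / 2) : False := by
  have h1 : -(Kr * M) * (P / γ) ≤ E := by linarith
  have h2 : C * (-(Kr * M) * (P / γ)) ≤ C * E := mul_le_mul_of_nonneg_left h1 hC.le
  have h3 : C * Kr * P / γ * M ≤ 1 / 2 * M := mul_le_mul_of_nonneg_right hhalf hM.le
  have h4 : C * (-(Kr * M) * (P / γ)) = -(C * Kr * P / γ * M) := by ring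
  linarith [h2, h3, h4]

set_option maxHeartbeats 1600000 in
/-- comparison of solutions for ordered right-hand sides. -/
theorem stmt9 (γ α β : ℝ) (f₁ f₂ : ℝ → ℝ) (u₁ u₂ : ℝ → ℝ) (a₁ a₂ : ℝ)
    (hγ : γ ∈ Set.Ioo (0:ℝ) 1) (hαβ : α < β)
    (hf₁ : ∀ x ∈ Set.Ioo α β, ∃ K : NNReal, ∃ s ∈ 𝓝[Set.Ioo α β] x, LipschitzOnWith K f₁ s)
    (hf₂ : ∀ x ∈ Set.Ioo α β, ∃ K : NNReal, ∃ s ∈ 𝓝[Set.Ioo α β] x, LipschitzOnWith K f₂ s)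
    (hle : ∀ x ∈ Set.Ioo α β, f₂ x ≤ f₁ x)
    (hmono : MonotoneOn f₁ (Set.Ioo α β) ∨ MonotoneOn f₂ (Set.Ioo α β))
    (ha₂ : α < a₂) (ha : a₂ ≤ a₁) (ha₁ : a₁ < β)
    (hu₁ : IsSolUpTo γ f₁ (Set.Ioo α β) a₁ u₁ (maxTime γ f₁ (Set.Ioo α β) a₁))
    (hu₂ : IsSolUpTo γ f₂ (Set.Ioo α β) a₂ u₂ (maxTime γ f₂ (Set.Ioo α β) a₂)) :
    ∀ t : ℝ, 0 < t →
      ENNReal.ofReal t < min (maxTime γ f₁ (Set.Ioo α β) a₁) (maxTime γ f₂ (Set.Ioo α β) a₂) →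
      u₂ t ≤ u₁ t := by
  obtain ⟨hγ0, hγ1⟩ := hγ
  obtain ⟨h10, h1c, h1m, h1e⟩ := hu₁
  obtain ⟨h20, h2c, h2m, h2e⟩ := hu₂
  set T₁ := maxTime γ f₁ (Set.Ioo α β) a₁ with hT₁def
  set T₂ := maxTime γ f₂ (Set.Ioo α β) a₂ with hT₂def
  set C := 1 / Real.Gamma γ with hCdef
  have hC : 0 < C := div_pos one_pos (Real.Gamma_pos_of_pos hγ0)
  -- unified monotone locally-Lipschitz comparison function
  obtain ⟨g, hgmono, hglip, hgkey⟩ :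
      ∃ g : ℝ → ℝ, MonotoneOn g (Set.Ioo α β) ∧
        (∀ x ∈ Set.Ioo α β, ∃ K : NNReal, ∃ s ∈ 𝓝[Set.Ioo α β] x, LipschitzOnWith K g s) ∧
        ∀ x ∈ Set.Ioo α β, ∀ y ∈ Set.Ioo α β, f₂ y - f₁ x ≤ g y - g x := by
    rcases hmono with h | h
    · exact ⟨f₁, h, hf₁, fun x hx y hy => by have := hle y hy; linarith⟩
    · exact ⟨f₂, h, hf₂, fun x hx y hy => by have := hle x hx; linarith⟩
  have hf₁cont : ContinuousOn f₁ (Set.Ioo α β) := aux_cont_of_lip hf₁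
  have hf₂cont : ContinuousOn f₂ (Set.Ioo α β) := aux_cont_of_lip hf₂
  set Sset : Set ℝ := {s : ℝ | 0 ≤ s ∧ ENNReal.ofReal s < min T₁ T₂} with hSdef
  have hS1 : Sset ⊆ {t : ℝ | 0 ≤ t ∧ ENNReal.ofReal t < T₁} :=
    fun s hs => ⟨hs.1, hs.2.trans_le (min_le_left _ _)⟩
  have hS2 : Sset ⊆ {t : ℝ | 0 ≤ t ∧ ENNReal.ofReal t < T₂} :=
    fun s hs => ⟨hs.1, hs.2.trans_le (min_le_right _ _)⟩
  have h1cS : ContinuousOn u₁ Sset := h1c.mono hS1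
  have h2cS : ContinuousOn u₂ Sset := h2c.mono hS2
  have hvc : ContinuousOn (fun s => u₁ s - u₂ s) Sset := h1cS.sub h2cS
  -- the main claim
  have key : ∀ t : ℝ, 0 ≤ t → ENNReal.ofReal t < min T₁ T₂ → 0 ≤ u₁ t - u₂ t := by
    by_contra hcon
    push_neg at hcon
    obtain ⟨tb, htb0, htbT, htbneg⟩ := hcon
    set B : Set ℝ := {s : ℝ | 0 ≤ s ∧ ENNReal.ofReal s < min T₁ T₂ ∧ u₁ s - u₂ s < 0} with hBdef
    have hBne : B.Nonempty := ⟨tb, htb0, htbT, htbneg⟩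
    have hbdd : BddBelow B := ⟨0, fun x hx => hx.1⟩
    have hBsub : B ⊆ Sset := fun s hs => ⟨hs.1, hs.2.1⟩
    set t₀ := sInf B with ht₀def
    have ht₀0 : 0 ≤ t₀ := le_csInf hBne fun x hx => hx.1
    have ht₀T : ENNReal.ofReal t₀ < min T₁ T₂ := by
      obtain ⟨x, hx⟩ := hBne
      exact lt_of_le_of_lt (ENNReal.ofReal_le_ofReal (csInf_le hbdd hx)) hx.2.1
    have ht₀S : t₀ ∈ Sset := ⟨ht₀0, ht₀T⟩
    -- nonnegativity strictly before t₀
    have hvlt : ∀ s, 0 ≤ s → s < t₀ → 0 ≤ u₁ s - u₂ s := by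
      intro s hs0 hst
      by_contra hneg
      push_neg at hneg
      have hsB : s ∈ B :=
        ⟨hs0, lt_of_le_of_lt (ENNReal.ofReal_le_ofReal hst.le) ht₀T, hneg⟩
      exact absurd (csInf_le hbdd hsB) (not_le.mpr hst)
    -- (u₁ - u₂) t₀ ≤ 0
    have hvt₀le : u₁ t₀ - u₂ t₀ ≤ 0 := by
      have hne : (𝓝[B] t₀).NeBot :=
        mem_closure_iff_nhdsWithin_neBot.mp (csInf_mem_closure hBne hbdd)
      have htend : Tendsto (fun s => u₁ s - u₂ s) (𝓝[B] t₀) (𝓝 (u₁ t₀ - u₂ t₀)) :=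
        (hvc t₀ ht₀S).mono hBsub
      exact le_of_tendsto htend (eventually_nhdsWithin_of_forall fun s hs => hs.2.2.le)
    have hvt₀ : u₁ t₀ - u₂ t₀ = 0 := by
      rcases eq_or_lt_of_le ht₀0 with h0 | h0
      · rw [← h0, h10, h20] at hvt₀le ⊢
        linarith
      · have hcl : t₀ ∈ closure (Ico 0 t₀) := by
          rw [closure_Ico h0.ne]
          exact ⟨ht₀0, le_refl _⟩
        have hne : (𝓝[Ico 0 t₀] t₀).NeBot := mem_closure_iff_nhdsWithin_neBot.mp hcl
        have hsub : Ico 0 t₀ ⊆ Sset := fun s hs =>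
          ⟨hs.1, lt_of_le_of_lt (ENNReal.ofReal_le_ofReal hs.2.le) ht₀T⟩
        have htend : Tendsto (fun s => u₁ s - u₂ s) (𝓝[Ico 0 t₀] t₀) (𝓝 (u₁ t₀ - u₂ t₀)) :=
          (hvc t₀ ht₀S).mono hsub
        have hge : 0 ≤ u₁ t₀ - u₂ t₀ :=
          ge_of_tendsto htend (eventually_nhdsWithin_of_forall fun s hs => hvlt s hs.1 hs.2)
        linarith
    have hvnonneg : ∀ s, 0 ≤ s → s ≤ t₀ → 0 ≤ u₁ s - u₂ s := by
      intro s hs0 hst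
      rcases eq_or_lt_of_le hst with h | h
      · rw [h, hvt₀]
      · exact hvlt s hs0 h
    -- Lipschitz data around the touching value
    set x₀ := u₁ t₀ with hx₀def
    have hx₀D : x₀ ∈ Set.Ioo α β := h1m t₀ ht₀0 (hS1 ht₀S).2
    have hu2t₀ : u₂ t₀ = x₀ := by rw [hx₀def]; linarith
    obtain ⟨K, L, hL, hLip⟩ := hglip x₀ hx₀D
    rw [Metric.mem_nhdsWithin_iff] at hL
    obtain ⟨ε, hε, hball⟩ := hL
    set Kr : ℝ := (K : ℝ) + 1 with hKrdef
    have hKr : 0 < Kr := by positivity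
    -- find δ₁ from continuity
    have h1ball : ∀ᶠ s in 𝓝[Sset] t₀, u₁ s ∈ Metric.ball x₀ ε :=
      (h1cS t₀ ht₀S) (Metric.ball_mem_nhds _ hε)
    have h2' : ContinuousWithinAt u₂ Sset t₀ := h2cS t₀ ht₀S
    rw [ContinuousWithinAt, hu2t₀] at h2'
    have h2ball : ∀ᶠ s in 𝓝[Sset] t₀, u₂ s ∈ Metric.ball x₀ ε :=
      h2' (Metric.ball_mem_nhds _ hε)
    have hev : {s : ℝ | u₁ s ∈ Metric.ball x₀ ε ∧ u₂ s ∈ Metric.ball x₀ ε} ∈ 𝓝[Sset] t₀ :=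
      h1ball.and h2ball
    rw [Metric.mem_nhdsWithin_iff] at hev
    obtain ⟨δ₁, hδ₁, hδball⟩ := hev
    -- δ₃ making the contraction constant ≤ 1/2
    set δ₃ : ℝ := (γ / (2 * C * Kr)) ^ γ⁻¹ with hδ₃def
    have hbase : 0 < γ / (2 * C * Kr) := by positivity
    have hδ₃ : 0 < δ₃ := Real.rpow_pos_of_pos hbase _
    have hhalf : ∀ x : ℝ, 0 ≤ x → x ≤ δ₃ → C * Kr * (x ^ γ) / γ ≤ 1 / 2 := by
      intro x hx hxδ
      have hxγ : x ^ γ ≤ δ₃ ^ γ := Real.rpow_le_rpow hx hxδ hγ0.le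
      rw [hδ₃def, Real.rpow_inv_rpow hbase.le hγ0.ne'] at hxγ
      have hCne : C ≠ 0 := hC.ne'
      have hKrne : Kr ≠ 0 := hKr.ne'
      have heq : C * Kr * (γ / (2 * C * Kr)) / γ = 1 / 2 := by
        field_simp
      calc C * Kr * x ^ γ / γ ≤ C * Kr * (γ / (2 * C * Kr)) / γ := by gcongr
        _ = 1 / 2 := heq
    set δ : ℝ := min δ₁ δ₃ with hδdef
    have hδ : 0 < δ := lt_min hδ₁ hδ₃
    obtain ⟨b, hbB, hblt⟩ := exists_lt_of_csInf_lt hBne (by linarith : sInf B < t₀ + δ)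
    have hbt₀ : t₀ ≤ b := csInf_le hbdd hbB
    have hbgt : t₀ < b := by
      rcases eq_or_lt_of_le hbt₀ with h | h
      · exfalso; rw [← h] at hbB; have := hbB.2.2; linarith
      · exact h
    have hIccS : Icc t₀ b ⊆ Sset := fun s hs =>
      ⟨ht₀0.trans hs.1, lt_of_le_of_lt (ENNReal.ofReal_le_ofReal hs.2) hbB.2.1⟩
    have hIcc0S : Icc 0 b ⊆ Sset := fun s hs =>
      ⟨hs.1, lt_of_le_of_lt (ENNReal.ofReal_le_ofReal hs.2) hbB.2.1⟩
    -- values stay in the Lipschitz set on [t₀, b]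
    have hLmem : ∀ s ∈ Icc t₀ b, u₁ s ∈ L ∧ u₂ s ∈ L := by
      intro s hs
      have hsS : s ∈ Sset := hIccS hs
      have hsball : s ∈ Metric.ball t₀ δ₁ := by
        rw [Metric.mem_ball, Real.dist_eq, abs_of_nonneg (by linarith [hs.1])]
        have := min_le_left δ₁ δ₃
        linarith [hs.2]
      have hmem := hδball ⟨hsball, hsS⟩
      exact ⟨hball ⟨hmem.1, h1m s hsS.1 (hS1 hsS).2⟩,
        hball ⟨hmem.2, h2m s hsS.1 (hS2 hsS).2⟩⟩
    -- the maximum of the deficiency on [t₀, b]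
    obtain ⟨τ, hτIcc, hτmax⟩ := isCompact_Icc.exists_isMaxOn (Set.nonempty_Icc.mpr hbt₀)
      ((hvc.mono hIccS).neg)
    set M : ℝ := -(u₁ τ - u₂ τ) with hMdef
    have hMb : -(u₁ b - u₂ b) ≤ M := hτmax ⟨hbt₀, le_refl b⟩
    have hMpos : 0 < M := by have h := hbB.2.2; linarith only [hMb, h]
    have hτt₀ : t₀ < τ := by
      rcases eq_or_lt_of_le hτIcc.1 with h | h
      · exfalso
        have hM0 : M = -(u₁ t₀ - u₂ t₀) := by rw [hMdef, ← h]
        linarith only [hM0, hvt₀, hx₀def, hMpos]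
      · exact h
    have hτb : τ ≤ b := hτIcc.2
    have hτ0 : 0 ≤ τ := ht₀0.trans hτIcc.1
    have hτS : τ ∈ Sset := hIccS hτIcc
    -- the integral equations at τ
    have he1 : u₁ τ = a₁ + C * ∫ s in (0:ℝ)..τ, (τ - s) ^ (γ - 1) * f₁ (u₁ s) :=
      h1e τ hτ0 (hS1 hτS).2
    have he2 : u₂ τ = a₂ + C * ∫ s in (0:ℝ)..τ, (τ - s) ^ (γ - 1) * f₂ (u₂ s) :=
      h2e τ hτ0 (hS2 hτS).2
    -- integrability
    have hsub0τ : Icc (0:ℝ) τ ⊆ Sset := fun s hs => hIcc0S ⟨hs.1, hs.2.trans hτb⟩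
    have hcu1 : ContinuousOn (fun s => f₁ (u₁ s)) (Icc 0 τ) :=
      hf₁cont.comp (h1c.mono fun s hs => hS1 (hsub0τ hs))
        fun s hs => h1m s (hsub0τ hs).1 (hS1 (hsub0τ hs)).2
    have hcu2 : ContinuousOn (fun s => f₂ (u₂ s)) (Icc 0 τ) :=
      hf₂cont.comp (h2c.mono fun s hs => hS2 (hsub0τ hs))
        fun s hs => h2m s (hsub0τ hs).1 (hS2 (hsub0τ hs)).2
    have I₁ : IntervalIntegrable (fun s => (τ - s) ^ (γ - 1) * f₁ (u₁ s)) volume 0 τ :=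
      aux_integrable hγ0 hτ0 hcu1
    have I₂ : IntervalIntegrable (fun s => (τ - s) ^ (γ - 1) * f₂ (u₂ s)) volume 0 τ :=
      aux_integrable hγ0 hτ0 hcu2
    have IW : IntervalIntegrable
        (fun s => (τ - s) ^ (γ - 1) * (f₁ (u₁ s) - f₂ (u₂ s))) volume 0 τ := by
      have := I₁.sub I₂
      simpa [mul_sub] using this
    -- the combined integral equation
    have hInt : u₁ τ - u₂ τ =
        (a₁ - a₂) + C * ∫ s in (0:ℝ)..τ, (τ - s) ^ (γ - 1) * (f₁ (u₁ s) - f₂ (u₂ s)) := by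
      have hsubint : (∫ s in (0:ℝ)..τ, (τ - s) ^ (γ - 1) * (f₁ (u₁ s) - f₂ (u₂ s)))
          = (∫ s in (0:ℝ)..τ, (τ - s) ^ (γ - 1) * f₁ (u₁ s))
            - ∫ s in (0:ℝ)..τ, (τ - s) ^ (γ - 1) * f₂ (u₂ s) := by
        rw [← intervalIntegral.integral_sub I₁ I₂]
        congr 1
        funext s
        ring
      rw [he1, he2, hsubint]
      ring
    -- split the integral at t₀
    have hsub1 : Set.uIcc (0:ℝ) t₀ ⊆ Set.uIcc (0:ℝ) τ := by
      rw [uIcc_of_le ht₀0, uIcc_of_le hτ0]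
      exact Icc_subset_Icc_right hτIcc.1
    have hsub2 : Set.uIcc t₀ τ ⊆ Set.uIcc (0:ℝ) τ := by
      rw [uIcc_of_le hτt₀.le, uIcc_of_le hτ0]
      exact Icc_subset_Icc_left ht₀0
    have IW1 := IW.mono_set hsub1
    have IW2 := IW.mono_set hsub2
    have hsplit := intervalIntegral.integral_add_adjacent_intervals IW1 IW2
    -- the first piece is nonnegative
    have hnn : 0 ≤ ∫ s in (0:ℝ)..t₀, (τ - s) ^ (γ - 1) * (f₁ (u₁ s) - f₂ (u₂ s)) := by
      apply intervalIntegral.integral_nonneg ht₀0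
      intro s hs
      have hsS : s ∈ Sset :=
        ⟨hs.1, lt_of_le_of_lt (ENNReal.ofReal_le_ofReal hs.2) ht₀T⟩
      have h1D := h1m s hsS.1 (hS1 hsS).2
      have h2D := h2m s hsS.1 (hS2 hsS).2
      have hkey := hgkey (u₁ s) h1D (u₂ s) h2D
      have hvpos := hvnonneg s hs.1 hs.2
      have hmon := hgmono h2D h1D (by linarith : u₂ s ≤ u₁ s)
      have hfac : 0 ≤ (τ - s) ^ (γ - 1) :=
        Real.rpow_nonneg (by linarith [hs.2, hτIcc.1] : 0 ≤ τ - s) _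
      exact mul_nonneg hfac (by linarith only [hkey, hmon])
    -- lower bound for the second piece
    have Iconst : IntervalIntegrable (fun s => -(Kr * M) * (τ - s) ^ (γ - 1)) volume t₀ τ :=
      ((aux_weight_integrable hγ0 (t := τ)).mono_set hsub2).const_mul _
    have hlow : -(Kr * M) * ((τ - t₀) ^ γ / γ)
        ≤ ∫ s in t₀..τ, (τ - s) ^ (γ - 1) * (f₁ (u₁ s) - f₂ (u₂ s)) := by
      have hmono' : (∫ s in t₀..τ, -(Kr * M) * (τ - s) ^ (γ - 1))
          ≤ ∫ s in t₀..τ, (τ - s) ^ (γ - 1) * (f₁ (u₁ s) - f₂ (u₂ s)) := by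
        apply intervalIntegral.integral_mono_on hτt₀.le Iconst IW2
        intro s hs
        have hsIccb : s ∈ Icc t₀ b := ⟨hs.1, hs.2.trans hτb⟩
        have hsS : s ∈ Sset := hIccS hsIccb
        have h1D := h1m s hsS.1 (hS1 hsS).2
        have h2D := h2m s hsS.1 (hS2 hsS).2
        have hkey := hgkey (u₁ s) h1D (u₂ s) h2D
        have hfac : 0 ≤ (τ - s) ^ (γ - 1) :=
          Real.rpow_nonneg (by linarith [hs.2] : 0 ≤ τ - s) _
        have hsL := hLmem s hsIccb
        have hdiff : -(Kr * M) ≤ f₁ (u₁ s) - f₂ (u₂ s) := by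
          rcases le_or_gt (u₂ s) (u₁ s) with h | h
          · have hmon := hgmono h2D h1D h
            have hKM : 0 ≤ Kr * M := le_of_lt (mul_pos hKr hMpos)
            linarith only [hkey, hmon, hKM]
          · have hd := hLip.dist_le_mul (u₂ s) hsL.2 (u₁ s) hsL.1
            rw [Real.dist_eq, Real.dist_eq] at hd
            have habs1 : |u₂ s - u₁ s| = u₂ s - u₁ s := abs_of_pos (by linarith)
            rw [habs1] at hd
            have hgd : g (u₂ s) - g (u₁ s) ≤ (K : ℝ) * (u₂ s - u₁ s) :=
              le_trans (le_abs_self _) hd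
            have hM' : -(u₁ s - u₂ s) ≤ M := hτmax hsIccb
            have hKle : (K : ℝ) ≤ Kr := by rw [hKrdef]; linarith only []
            have h4 : (K : ℝ) * (u₂ s - u₁ s) ≤ (K : ℝ) * M :=
              mul_le_mul_of_nonneg_left (by linarith only [hM']) K.coe_nonneg
            have h5 : (K : ℝ) * M ≤ Kr * M :=
              mul_le_mul_of_nonneg_right hKle hMpos.le
            linarith only [hkey, hgd, h4, h5]
        calc -(Kr * M) * (τ - s) ^ (γ - 1)
            = (τ - s) ^ (γ - 1) * (-(Kr * M)) := by ring
          _ ≤ (τ - s) ^ (γ - 1) * (f₁ (u₁ s) - f₂ (u₂ s)) :=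
              mul_le_mul_of_nonneg_left hdiff hfac
      have hconst : (∫ s in t₀..τ, -(Kr * M) * (τ - s) ^ (γ - 1))
          = -(Kr * M) * ((τ - t₀) ^ γ / γ) := by
        rw [intervalIntegral.integral_const_mul, aux_weight_integral hγ0]
      calc -(Kr * M) * ((τ - t₀) ^ γ / γ)
          = ∫ s in t₀..τ, -(Kr * M) * (τ - s) ^ (γ - 1) := hconst.symm
        _ ≤ _ := hmono'
    -- contraction estimate
    have hτδ : τ - t₀ ≤ δ₃ := by
      have h2 := min_le_right δ₁ δ₃
      linarith only [hτb, hblt, h2]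
    have hhalfτ : C * Kr * ((τ - t₀) ^ γ) / γ ≤ 1 / 2 :=
      hhalf (τ - t₀) (by linarith only [hτt₀]) hτδ
    -- assemble the contradiction
    have hInt' : -M = (a₁ - a₂) + C *
        ∫ s in (0:ℝ)..τ, (τ - s) ^ (γ - 1) * (f₁ (u₁ s) - f₂ (u₂ s)) := by
      rw [hMdef, neg_neg]
      exact hInt
    exact aux_final hC hMpos (by linarith only [ha] : (0:ℝ) ≤ a₁ - a₂)
      hInt' hsplit hnn hlow hhalfτ
  intro t ht hT
  have := key t ht.le hT
  linarith
end
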